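/- arXiv:1910.12290 — 7 statements merged into one kernel-verified Lean document; each statement's English description precedes it below -/
import Mathlib

section
/- Let p be an odd prime, G a group, ρ : G → GL₂(𝔽_p) an absolutely irreducible homomorphism, and ε : G → {±1} a surjective homomorphism such that there exists a matrix A ∈ GL₂(𝔽_p) with A·ρ(σ)·A⁻¹ = ε(σ)·ρ(σ) for all σ ∈ G. Then ρ(σ) has trace 0 for every σ ∈ G with ε(σ) = −1, and there is a Cartan subgroup C of GL₂(𝔽_p) such that ρ(G) is contained in the normalizer of C in GL₂(𝔽_p) and ρ(G) ∩ C = ρ(ker ε). -/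
open Matrix

/-- The subgroup of invertible diagonal matrices in `GL₂(𝔽_p)`. -/
def diagGL (p : ℕ) : Subgroup (GL (Fin 2) (ZMod p)) where
  carrier := {g | ∃ v : Fin 2 → ZMod p,
    (g : Matrix (Fin 2) (Fin 2) (ZMod p)) = Matrix.diagonal v}
  one_mem' := ⟨1, Matrix.diagonal_one.symm⟩
  mul_mem' := by
    rintro g h ⟨v, hv⟩ ⟨w, hw⟩
    exact ⟨v * w, by rw [Units.val_mul, hv, hw, Matrix.diagonal_mul_diagonal]; rfl⟩
  inv_mem' := by
    rintro g ⟨v, hv⟩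
    exact ⟨Ring.inverse v, by rw [Matrix.coe_units_inv, hv, Matrix.inv_diagonal]⟩

/-- The subgroup of `GL₂(𝔽_p)` consisting of the units of a subalgebra `A` of the
`2×2` matrix ring, i.e. the invertible matrices `g` with both `g` and `g⁻¹` in `A`. -/
def unitsIn (p : ℕ) (A : Subalgebra (ZMod p) (Matrix (Fin 2) (Fin 2) (ZMod p))) :
    Subgroup (GL (Fin 2) (ZMod p)) where
  carrier := {g | ((g : GL (Fin 2) (ZMod p)) : Matrix (Fin 2) (Fin 2) (ZMod p)) ∈ A ∧
    ((g⁻¹ : GL (Fin 2) (ZMod p)) : Matrix (Fin 2) (Fin 2) (ZMod p)) ∈ A}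
  one_mem' := ⟨A.one_mem, by rw [inv_one]; exact A.one_mem⟩
  mul_mem' := fun {g h} hg hh => ⟨by rw [Units.val_mul]; exact A.mul_mem hg.1 hh.1,
    by rw [_root_.mul_inv_rev, Units.val_mul]; exact A.mul_mem hh.2 hg.2⟩
  inv_mem' := fun {g} hg => ⟨hg.2, by rw [inv_inv]; exact hg.1⟩

/-- A split Cartan subgroup of `GL₂(𝔽_p)`: a conjugate of the subgroup of invertible
diagonal matrices. -/
def IsSplitCartan (p : ℕ) (C : Subgroup (GL (Fin 2) (ZMod p))) : Prop :=
  ∃ g : GL (Fin 2) (ZMod p), C = Subgroup.map (MulAut.conj g).toMonoidHom (diagGL p)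

/-- A non-split Cartan subgroup of `GL₂(𝔽_p)`: the group of units of an
`𝔽_p`-subalgebra of the `2×2` matrix ring which is a field with `p²` elements. -/
def IsNonsplitCartan (p : ℕ) (C : Subgroup (GL (Fin 2) (ZMod p))) : Prop :=
  ∃ A : Subalgebra (ZMod p) (Matrix (Fin 2) (Fin 2) (ZMod p)),
    IsField A ∧ Nat.card A = p ^ 2 ∧ C = unitsIn p A

/-- A Cartan subgroup of `GL₂(𝔽_p)` is a split or non-split Cartan subgroup. -/
def IsCartan (p : ℕ) (C : Subgroup (GL (Fin 2) (ZMod p))) : Prop :=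
  IsSplitCartan p C ∨ IsNonsplitCartan p C

/-- A homomorphism `ρ : G → GL₂(𝔽_p)` is absolutely irreducible if no line of
`𝔽̄_p²` is preserved by every `ρ(σ)`. -/
def AbsIrreducible (p : ℕ) [Fact p.Prime] {G : Type*} [Group G] (ρ : G →* GL (Fin 2) (ZMod p)) : Prop :=
  ¬ ∃ v : Fin 2 → AlgebraicClosure (ZMod p), v ≠ 0 ∧
    ∀ σ : G, ∃ c : AlgebraicClosure (ZMod p),
      (((ρ σ : GL (Fin 2) (ZMod p)) : Matrix (Fin 2) (Fin 2) (ZMod p)).map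
        (algebraMap (ZMod p) (AlgebraicClosure (ZMod p)))).mulVec v = c • v

/-!
Since `ε` is onto, `A` anticommutes with some `ρ(τ)`; conjugating by `ρ(τ)` negates `A`, so
`tr A = 0` and, `p` being odd, `A² = -det A` is a nonzero scalar while `A` is not scalar. The
centralizer `C` of `A` in `GL₂(𝔽_p)` is then a Cartan subgroup: split when `-det A = μ²` (then
`A` is diagonalizable with eigenvalues `±μ`), non-split otherwise (then `𝔽_p[A]` is a field with
`p²` elements, and it is the commutant of `A`). Every `ρ(σ)` conjugates `A` to `ε(σ) A`, hence
normalizes `C`, and lies in `C` exactly when `ε(σ) = 1`.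
-/

theorem Algebra.smul_one_add_smul_mem_adjoin_singleton {R A : Type*} [CommSemiring R] [Semiring A]
    [Algebra R A] (a : A) (x y : R) : x • 1 + y • a ∈ Algebra.adjoin R {a} :=
  add_mem (Subalgebra.smul_mem _ (one_mem _) x)
    (Subalgebra.smul_mem _ (Algebra.self_mem_adjoin_singleton R a) y)

section TwoByTwo

variable {K : Type*} [Field K]

theorem Matrix.mul_self_eq_neg_det_smul_one_of_trace_eq_zero {a : Matrix (Fin 2) (Fin 2) K}
    (ht : a.trace = 0) : a * a = (-a.det) • 1 := by
  have h := aeval_self_charpoly a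
  rw [charpoly_fin_two, ht] at h
  simpa [sq, Algebra.algebraMap_eq_smul_one, add_eq_zero_iff_eq_neg] using h

theorem Matrix.exists_eq_smul_one_add_smul_of_commute {a m : Matrix (Fin 2) (Fin 2) K}
    (ha : ∀ c : K, a ≠ c • 1) (h : Commute a m) : ∃ x y : K, m = x • 1 + y • a := by
  have e : ∀ i j, (a * m) i j = (m * a) i j := fun i j => by rw [h.eq]
  have e00 := e 0 0; have e01 := e 0 1; have e10 := e 1 0
  simp only [mul_apply, Fin.sum_univ_two] at e00 e01 e10
  -- `a * m = m * a` says that `(m₀₀ - m₁₁, m₀₁, m₁₀)` is parallel to `(a₀₀ - a₁₁, a₀₁, a₁₀)`,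
  -- which is nonzero as `a` is not scalar
  suffices ∃ y, m 0 0 - m 1 1 = y * (a 0 0 - a 1 1) ∧ m 0 1 = y * a 0 1 ∧ m 1 0 = y * a 1 0 by
    obtain ⟨y, h0, h1, h2⟩ := this
    refine ⟨m 1 1 - y * a 1 1, y, ?_⟩
    ext i j
    fin_cases i <;> fin_cases j <;> simp [h1, h2]
    linear_combination h0
  by_cases h01 : a 0 1 = 0
  · by_cases h10 : a 1 0 = 0
    · have hd : a 0 0 - a 1 1 ≠ 0 := by
        refine sub_ne_zero.mpr fun hd => ha (a 0 0) ?_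
        ext i j
        fin_cases i <;> fin_cases j <;> simp [h01, h10, hd]
      refine ⟨(m 0 0 - m 1 1) / (a 0 0 - a 1 1), by field_simp, ?_, ?_⟩ <;>
        simp only [h01, h10, mul_zero] at e01 e10 ⊢ <;> refine (mul_left_inj' hd).mp ?_
      · linear_combination e01
      · linear_combination -e10
    · refine ⟨m 1 0 / a 1 0, ?_, ?_, by field_simp⟩ <;>
        rw [div_mul_eq_mul_div, eq_div_iff h10]
      · linear_combination e10
      · linear_combination -e00
  · refine ⟨m 0 1 / a 0 1, ?_, by field_simp, ?_⟩ <;>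
        rw [div_mul_eq_mul_div, eq_div_iff h01]
    · linear_combination -e01
    · linear_combination e00

theorem Matrix.commute_iff_mem_adjoin_singleton {a m : Matrix (Fin 2) (Fin 2) K}
    (ha : ∀ c : K, a ≠ c • 1) : Commute a m ↔ m ∈ Algebra.adjoin K {a} := by
  refine ⟨fun h => ?_, Algebra.commute_of_mem_adjoin_self⟩
  obtain ⟨x, y, rfl⟩ := exists_eq_smul_one_add_smul_of_commute ha h
  exact Algebra.smul_one_add_smul_mem_adjoin_singleton a x y

theorem Matrix.ne_smul_one_of_mul_self_eq {a : Matrix (Fin 2) (Fin 2) K} {c : K}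
    (ha : a * a = c • 1) (hc : ¬IsSquare c) (s : K) : a ≠ s • 1 := by
  rintro rfl
  refine hc ⟨s, smul_left_injective K (one_ne_zero (α := Matrix (Fin 2) (Fin 2) K)) ?_⟩
  simpa [smul_smul] using ha.symm

theorem Matrix.isField_adjoin_singleton {a : Matrix (Fin 2) (Fin 2) K} {c : K}
    (ha : a * a = c • 1) (hc : ¬IsSquare c) : IsField (Algebra.adjoin K {a}) := by
  have hns := ne_smul_one_of_mul_self_eq ha hc
  refine ⟨exists_pair_ne _, fun s t => Subtype.ext ?_, fun {s} hs => ?_⟩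
  · exact Algebra.commute_of_mem_adjoin_singleton_of_commute t.2
      (Algebra.commute_of_mem_adjoin_self s.2).symm
  obtain ⟨x, y, hxy⟩ :=
    exists_eq_smul_one_add_smul_of_commute hns (Algebra.commute_of_mem_adjoin_self s.2)
  -- the norm `x² - c y²` of `x + y a` vanishes only at `0` since `c` is not a square
  have hn : x * x - c * (y * y) ≠ 0 := by
    intro hn
    rcases eq_or_ne y 0 with rfl | hy
    · exact hs (Subtype.ext (by simpa [hxy] using hn))
    · exact hc ⟨x / y, by field_simp; linear_combination -hn⟩
  refine ⟨⟨(x * x - c * (y * y))⁻¹ • (x • 1 + (-y) • a), Subalgebra.smul_mem _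
    (Algebra.smul_one_add_smul_mem_adjoin_singleton a x (-y)) _⟩, Subtype.ext ?_⟩
  have hnorm :
      (x • 1 + y • a) * (x • 1 + (-y) • a) = (x * x - c * (y * y)) • (1 : Matrix _ _ K) := by
    simp only [add_mul, mul_add, smul_mul_smul, one_mul, mul_one, ha, smul_smul]
    module
  simp only [Subalgebra.coe_mul, hxy, Subalgebra.coe_one, mul_smul_comm, hnorm, smul_smul,
    inv_mul_cancel₀ hn, one_smul]

theorem Matrix.natCard_adjoin_singleton {a : Matrix (Fin 2) (Fin 2) K}
    (ha : ∀ c : K, a ≠ c • 1) : Nat.card (Algebra.adjoin K {a}) = Nat.card K ^ 2 := by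
  have hli : LinearIndependent K ![1, a] :=
    (LinearIndependent.pair_iff' one_ne_zero).mpr fun c h => ha c h.symm
  let f : K × K → Algebra.adjoin K {a} := fun z =>
    ⟨z.1 • 1 + z.2 • a, Algebra.smul_one_add_smul_mem_adjoin_singleton a z.1 z.2⟩
  have hf : Function.Bijective f := by
    refine ⟨fun z w h => ?_, fun m => ?_⟩
    · obtain ⟨h1, h2⟩ := hli.eq_of_pair (by simpa [f] using congrArg Subtype.val h)
      exact Prod.ext h1 h2
    · obtain ⟨x, y, hxy⟩ := exists_eq_smul_one_add_smul_of_commute ha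
        (Algebra.commute_of_mem_adjoin_self m.2)
      exact ⟨(x, y), Subtype.ext hxy.symm⟩
  rw [← Nat.card_congr (Equiv.ofBijective f hf), Nat.card_prod, sq]

theorem Matrix.exists_mul_eq_mul_diagonal_of_trace_eq_zero
    (h2 : (2 : K) ≠ 0) {a : Matrix (Fin 2) (Fin 2) K} (ht : a.trace = 0) {μ : K} (hμ0 : μ ≠ 0)
    (hμ : -a.det = μ * μ) :
    ∃ g : GL (Fin 2) K, ∃ d : Fin 2 → K, d 0 ≠ d 1 ∧ a * g = g * diagonal d := by
  have h_ne_neg : ∀ x : K, x ≠ 0 → x ≠ -x := fun x hx h =>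
    mul_ne_zero h2 hx (by linear_combination h)
  rw [trace_fin_two, add_eq_zero_iff_eq_neg'] at ht
  rw [det_fin_two, ht] at hμ
  -- the columns of `g` are eigenvectors of `a`
  by_cases h01 : a 0 1 = 0
  · have ha00 : a 0 0 ≠ 0 := fun h00 => hμ0 (mul_self_eq_zero.mp (by rw [← hμ, h01, h00]; ring))
    refine ⟨GeneralLinearGroup.mkOfDetNeZero !![2 * a 0 0, 0; a 1 0, 1] ?_, ![a 0 0, -a 0 0],
      h_ne_neg _ ha00, ?_⟩
    · simpa [det_fin_two_of] using mul_ne_zero h2 ha00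
    · ext i j
      fin_cases i <;> fin_cases j <;> simp [mul_apply, Fin.sum_univ_two, ht, h01] <;> ring
  · refine ⟨GeneralLinearGroup.mkOfDetNeZero !![a 0 1, a 0 1; μ - a 0 0, -μ - a 0 0] ?_,
      ![μ, -μ], h_ne_neg _ hμ0, ?_⟩
    · rw [det_fin_two_of]
      exact fun h => mul_ne_zero h2 (mul_ne_zero h01 hμ0) (by linear_combination -h)
    · ext i j
      fin_cases i <;> fin_cases j <;> simp [mul_apply, Fin.sum_univ_two, ht] <;> grind

end TwoByTwo

section GeneralLinearGroup

variable {n R : Type*} [Fintype n] [DecidableEq n] [CommRing R] [NoZeroDivisors R]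

theorem Matrix.GeneralLinearGroup.trace_eq_zero_of_mul_eq_neg_mul (h2 : (2 : R) ≠ 0)
    {u v : GL n R} (h : u * v = -(v * u)) : trace (u : Matrix n n R) = 0 := by
  have hconj : v⁻¹ * u * v = -u := by rw [mul_assoc, h, mul_neg, inv_mul_cancel_left]
  have htr := trace_units_conj' v (u : Matrix n n R)
  rw [← Units.val_mul, ← Units.val_mul, hconj, Units.val_neg, trace_neg] at htr
  have h2tr : 2 * trace (u : Matrix n n R) = 0 := by linear_combination -htr
  exact (mul_eq_zero.mp h2tr).resolve_left h2

theorem Matrix.GeneralLinearGroup.ne_neg_self [Nonempty n] (h2 : (2 : R) ≠ 0) (u : GL n R) :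
    u ≠ -u := by
  have : Nontrivial R := ⟨⟨2, 0, h2⟩⟩
  intro h
  have h2u : (2 : R) • (u : Matrix n n R) = 0 := by
    rw [two_smul]; nth_rw 2 [h]; rw [Units.val_neg, add_neg_cancel]
  exact u.ne_zero ((smul_eq_zero.mp h2u).resolve_left h2)

end GeneralLinearGroup

theorem Subgroup.mem_normalizer_centralizer_of_mul_eq_neg {G : Type*} [Group G] [HasDistribNeg G]
    {a g : G} (h : a * g = -(g * a)) : g ∈ normalizer (centralizer {a} : Set G) := by
  have hconj : g * a * g⁻¹ = -a := by rw [← neg_eq_iff_eq_neg.mpr h, neg_mul, mul_inv_cancel_right]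
  refine mem_normalizer_iff.mpr fun x => ?_
  simp only [mem_centralizer_singleton_iff]
  change Commute x a ↔ Commute (g * x * g⁻¹) a
  rw [← Commute.conj_iff g, hconj, Commute.neg_right_iff]

section Cartan

variable {p : ℕ} [Fact p.Prime]

theorem diagGL_eq_centralizer {D : GL (Fin 2) (ZMod p)} {d : Fin 2 → ZMod p}
    (hD : (D : Matrix (Fin 2) (Fin 2) (ZMod p)) = diagonal d) (hd : d 0 ≠ d 1) :
    diagGL p = Subgroup.centralizer {D} := by
  ext x
  rw [Subgroup.mem_centralizer_singleton_iff, ← Units.val_inj, Units.val_mul, Units.val_mul, hD]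
  constructor
  · rintro ⟨v, hv⟩
    simp only [hv, diagonal_mul_diagonal, mul_comm]
  · intro hx
    have hns : ∀ c : ZMod p, diagonal d ≠ c • 1 := fun c hc =>
      hd (by rw [← diagonal_apply_eq d 0, ← diagonal_apply_eq d 1, hc]; simp)
    obtain ⟨s, t, hst⟩ := exists_eq_smul_one_add_smul_of_commute hns hx.symm
    exact ⟨fun i => s + t * d i, by rw [hst]; ext i j; fin_cases i <;> fin_cases j <;> simp⟩

theorem isSplitCartan_centralizer {A g : GL (Fin 2) (ZMod p)} {d : Fin 2 → ZMod p}
    (hd : d 0 ≠ d 1) (hAg : (A : Matrix (Fin 2) (Fin 2) (ZMod p)) * g = g * diagonal d) :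
    IsSplitCartan p (Subgroup.centralizer {A}) := by
  have hD : ((g⁻¹ * A * g : GL (Fin 2) (ZMod p)) : Matrix (Fin 2) (Fin 2) (ZMod p)) =
      diagonal d := by
    rw [mul_assoc, Units.val_mul, Units.val_mul, hAg, ← mul_assoc, ← Units.val_mul,
      inv_mul_cancel, Units.val_one, one_mul]
  refine ⟨g, ?_⟩
  ext x
  rw [diagGL_eq_centralizer hD hd, Subgroup.mem_map_equiv, MulAut.conj_symm_apply,
    Subgroup.mem_centralizer_singleton_iff, Subgroup.mem_centralizer_singleton_iff]
  change Commute x A ↔ Commute (g⁻¹ * x * g) (g⁻¹ * A * g)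
  simpa using (Commute.conj_iff g⁻¹).symm

theorem unitsIn_adjoin_eq_centralizer {A : GL (Fin 2) (ZMod p)}
    (hA : ∀ c : ZMod p, (A : Matrix (Fin 2) (Fin 2) (ZMod p)) ≠ c • 1) :
    unitsIn p (Algebra.adjoin (ZMod p) {(A : Matrix (Fin 2) (Fin 2) (ZMod p))}) =
      Subgroup.centralizer {A} := by
  ext x
  rw [Subgroup.mem_centralizer_singleton_iff]
  change _ ∧ _ ↔ Commute x A
  rw [← commute_iff_mem_adjoin_singleton hA, ← commute_iff_mem_adjoin_singleton hA,
    Commute.units_val_iff, Commute.units_val_iff, Commute.inv_right_iff, and_self]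
  exact Commute.symm_iff

theorem isNonsplitCartan_centralizer {A : GL (Fin 2) (ZMod p)} {c : ZMod p}
    (hA : (A : Matrix (Fin 2) (Fin 2) (ZMod p)) * A = c • 1) (hc : ¬IsSquare c) :
    IsNonsplitCartan p (Subgroup.centralizer {A}) :=
  have hns := ne_smul_one_of_mul_self_eq hA hc
  ⟨_, isField_adjoin_singleton hA hc, by rw [natCard_adjoin_singleton hns, Nat.card_zmod],
    (unitsIn_adjoin_eq_centralizer hns).symm⟩

theorem isCartan_centralizer_of_trace_eq_zero (h2 : (2 : ZMod p) ≠ 0) {A : GL (Fin 2) (ZMod p)}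
    (ht : trace (A : Matrix (Fin 2) (Fin 2) (ZMod p)) = 0) :
    IsCartan p (Subgroup.centralizer {A}) := by
  by_cases hsq : IsSquare (-(A : Matrix (Fin 2) (Fin 2) (ZMod p)).det)
  · obtain ⟨μ, hμ⟩ := hsq
    have hμ0 : μ ≠ 0 := by
      rintro rfl
      exact A.det_ne_zero (neg_eq_zero.mp (by simpa using hμ))
    obtain ⟨g, d, hd, hAg⟩ := exists_mul_eq_mul_diagonal_of_trace_eq_zero h2 ht hμ0 hμ
    exact Or.inl (isSplitCartan_centralizer hd hAg)
  · exact Or.inr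
      (isNonsplitCartan_centralizer (mul_self_eq_neg_det_smul_one_of_trace_eq_zero ht) hsq)

end Cartan

theorem absIrred_twist_self_normalizer_of_cartan_general (p : ℕ) [Fact p.Prime] (hp : Odd p)
    {G : Type*} [Group G] (ρ : G →* GL (Fin 2) (ZMod p))
    (ε : G →* ℤˣ) (hsurj : Function.Surjective ε)
    (A : GL (Fin 2) (ZMod p))
    (hA : ∀ σ : G, ((A * ρ σ * A⁻¹ : GL (Fin 2) (ZMod p)) : Matrix (Fin 2) (Fin 2) (ZMod p)) =
      ((ε σ : ℤ)) • ((ρ σ : GL (Fin 2) (ZMod p)) : Matrix (Fin 2) (Fin 2) (ZMod p))) :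
    (∀ σ : G, ε σ = -1 →
      Matrix.trace ((ρ σ : GL (Fin 2) (ZMod p)) : Matrix (Fin 2) (Fin 2) (ZMod p)) = 0) ∧
    ∃ C : Subgroup (GL (Fin 2) (ZMod p)), IsCartan p C ∧
      ρ.range ≤ Subgroup.normalizer (C : Set (GL (Fin 2) (ZMod p))) ∧ ρ.range ⊓ C = Subgroup.map ρ ε.ker := by
  have h2 : (2 : ZMod p) ≠ 0 := by
    rw [← one_add_one_eq_two]
    exact mt (ZMod.add_self_eq_zero_iff_eq_zero hp).mp one_ne_zero
  have hcomm : ∀ σ, ε σ = 1 → ρ σ * A = A * ρ σ := fun σ hσ =>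
    (mul_inv_eq_iff_eq_mul.mp (Units.val_inj.mp (by simpa [hσ] using hA σ))).symm
  have hanti : ∀ σ, ε σ = -1 → A * ρ σ = -(ρ σ * A) := fun σ hσ => by
    rw [← neg_mul, ← mul_inv_eq_iff_eq_mul]
    exact Units.val_inj.mp (by simpa [hσ] using hA σ)
  obtain ⟨τ, hτ⟩ := hsurj (-1)
  refine ⟨fun σ hσ => GeneralLinearGroup.trace_eq_zero_of_mul_eq_neg_mul h2
      (neg_eq_iff_eq_neg.mp (hanti σ hσ).symm), _, isCartan_centralizer_of_trace_eq_zero h2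
      (GeneralLinearGroup.trace_eq_zero_of_mul_eq_neg_mul h2 (hanti τ hτ)), ?_, le_antisymm ?_ ?_⟩
  · rintro _ ⟨σ, rfl⟩
    rcases Int.units_eq_one_or (ε σ) with hσ | hσ
    · exact Subgroup.le_normalizer (Subgroup.mem_centralizer_singleton_iff.mpr (hcomm σ hσ))
    · exact Subgroup.mem_normalizer_centralizer_of_mul_eq_neg (hanti σ hσ)
  · rintro _ ⟨⟨σ, rfl⟩, hσ⟩
    refine ⟨σ, (Int.units_eq_one_or (ε σ)).resolve_right fun h => ?_, rfl⟩
    have hσA : ρ σ * A = A * ρ σ := Subgroup.mem_centralizer_singleton_iff.mp hσ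
    exact GeneralLinearGroup.ne_neg_self h2 (A * ρ σ) ((hanti σ h).trans (by rw [hσA]))
  · rintro _ ⟨σ, hσ, rfl⟩
    exact ⟨⟨σ, rfl⟩, Subgroup.mem_centralizer_singleton_iff.mpr (hcomm σ hσ)⟩

theorem absIrred_twist_self_normalizer_of_cartan (p : ℕ) [Fact p.Prime] (hp : Odd p)
    {G : Type*} [Group G] (ρ : G →* GL (Fin 2) (ZMod p)) (hirr : AbsIrreducible p ρ)
    (ε : G →* ℤˣ) (hsurj : Function.Surjective ε)
    (A : GL (Fin 2) (ZMod p))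
    (hA : ∀ σ : G, ((A * ρ σ * A⁻¹ : GL (Fin 2) (ZMod p)) : Matrix (Fin 2) (Fin 2) (ZMod p)) =
      ((ε σ : ℤ)) • ((ρ σ : GL (Fin 2) (ZMod p)) : Matrix (Fin 2) (Fin 2) (ZMod p))) :
    (∀ σ : G, ε σ = -1 →
      Matrix.trace ((ρ σ : GL (Fin 2) (ZMod p)) : Matrix (Fin 2) (Fin 2) (ZMod p)) = 0) ∧
    ∃ C : Subgroup (GL (Fin 2) (ZMod p)), IsCartan p C ∧
      ρ.range ≤ Subgroup.normalizer (C : Set (GL (Fin 2) (ZMod p))) ∧ ρ.range ⊓ C = Subgroup.map ρ ε.ker :=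
  absIrred_twist_self_normalizer_of_cartan_general p hp ρ ε hsurj A hA
end

section
/- Let p be an odd prime, G a group, and ρ : G → GL₂(𝔽_p) a homomorphism. Let C be a Cartan subgroup of GL₂(𝔽_p) with normalizer N in GL₂(𝔽_p), and suppose ρ(G) ⊆ N but ρ(G) ⊄ C. Then the map ε : G → {±1} defined by ε(σ) = 1 if ρ(σ) ∈ C and ε(σ) = −1 otherwise is a group homomorphism, and there exists a matrix A ∈ GL₂(𝔽_p) such that A·ρ(σ)·A⁻¹ = ε(σ)·ρ(σ) for all σ ∈ G. -/
open Matrix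

/-!
Every Cartan subgroup `C` of `GL₂(𝔽_p)` is the centralizer of a trace-zero element `u`: a
conjugate of `diag(1, -1)` in the split case, and `2x - tr x` for any non-scalar `x` of the field
in the non-split case. Since `u² = -det u` is a nonzero scalar and `2` is invertible, the
polarised Cayley–Hamilton identity shows that the matrices commuting with `u` are exactly
`𝔽_p + 𝔽_p u`, whose trace-zero part is the line `𝔽_p u`. If `g` normalizes `C`, then `g u g⁻¹`
is a trace-zero element commuting with `u` and of the same determinant as `u`, hence equals
`±u`; the sign is `+` exactly when `g ∈ C`, and in the other case `u g u⁻¹ = -g`. So `A = u`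
works, and `ε` is multiplicative because the product of two elements of the normalizer outside
`C` commutes with `u`.
-/

open Subgroup

namespace Matrix

variable {K : Type*}

/-- Polarised Cayley–Hamilton identity. -/
theorem mul_add_mul_fin_two [CommRing K] (X Y : Matrix (Fin 2) (Fin 2) K) :
    X * Y + Y * X = X.trace • Y + Y.trace • X + ((X * Y).trace - X.trace * Y.trace) • 1 := by
  ext i j
  fin_cases i <;> fin_cases j <;> simp [mul_apply, trace_fin_two] <;> ring

theorem mul_self_eq_neg_det_smul_one_of_trace_eq_zero_s9 [CommRing K]
    {u : Matrix (Fin 2) (Fin 2) K} (hu : u.trace = 0) : u * u = -u.det • 1 := by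
  have hu11 : u 1 1 = -u 0 0 := by rw [trace_fin_two] at hu; linear_combination hu
  ext i j
  fin_cases i <;> fin_cases j <;> simp [mul_apply, det_fin_two, hu11] <;> ring

theorem exists_eq_smul_one_add_smul_of_commute_s9 [Field K] (h2 : (2 : K) ≠ 0)
    {u m : Matrix (Fin 2) (Fin 2) K} (hu : u.trace = 0) (hdet : u.det ≠ 0) (hm : Commute m u) :
    ∃ a b : K, m = a • 1 + b • u := by
  have hpol := mul_add_mul_fin_two m u
  rw [← hm.eq, hu, zero_smul, add_zero, mul_zero, sub_zero] at hpol
  have hsq := mul_self_eq_neg_det_smul_one_of_trace_eq_zero_s9 hu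
  have key : (2 * u.det) • m = (m.trace * u.det) • 1 - (m * u).trace • u :=
    calc (2 * u.det) • m = -((m * u + m * u) * u) := by
          rw [add_mul, mul_assoc, hsq, Matrix.mul_smul, mul_one]; module
      _ = -((m.trace • u + (m * u).trace • 1) * u) := by rw [hpol]
      _ = (m.trace * u.det) • 1 - (m * u).trace • u := by
          rw [add_mul, smul_mul_assoc, smul_mul_assoc, hsq, one_mul]; module
  refine ⟨m.trace / 2, -(m * u).trace / (2 * u.det),
    smul_right_injective _ (mul_ne_zero h2 hdet) ?_⟩
  dsimp only
  rw [key, smul_add, smul_smul, smul_smul]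
  match_scalars <;> field_simp

theorem exists_eq_smul_of_commute_of_trace_eq_zero [Field K] (h2 : (2 : K) ≠ 0)
    {u w : Matrix (Fin 2) (Fin 2) K} (hu : u.trace = 0) (hdet : u.det ≠ 0) (hw : w.trace = 0)
    (hwu : Commute w u) : ∃ b : K, w = b • u := by
  obtain ⟨a, b, rfl⟩ := exists_eq_smul_one_add_smul_of_commute_s9 h2 hu hdet hwu
  have ha : a = 0 := by simpa [trace_add, trace_smul, trace_one, hu, h2] using hw
  exact ⟨b, by rw [ha, zero_smul, zero_add]⟩

theorem mem_subalgebra_of_commute [Field K] (h2 : (2 : K) ≠ 0)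
    {A : Subalgebra K (Matrix (Fin 2) (Fin 2) K)} {u m : Matrix (Fin 2) (Fin 2) K}
    (huA : u ∈ A) (hu : u.trace = 0) (hdet : u.det ≠ 0) (hm : Commute m u) : m ∈ A := by
  obtain ⟨a, b, rfl⟩ := exists_eq_smul_one_add_smul_of_commute_s9 h2 hu hdet hm
  exact A.add_mem (A.smul_mem A.one_mem a) (A.smul_mem huA b)

end Matrix

namespace Subgroup

variable {Γ : Type*} [Group Γ]

theorem mem_centralizer_singleton_iff_conj {u x : Γ} :
    x ∈ centralizer {u} ↔ u * x * u⁻¹ = x := by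
  rw [mem_centralizer_singleton_iff, mul_inv_eq_iff_eq_mul, eq_comm]

theorem map_conj_centralizer_singleton (g u : Γ) :
    (centralizer {u}).map (MulAut.conj g).toMonoidHom = centralizer {g * u * g⁻¹} := by
  ext x
  rw [mem_map_equiv, MulAut.conj_symm_apply, mem_centralizer_singleton_iff,
    mem_centralizer_singleton_iff,
    show x * (g * u * g⁻¹) = g * (g⁻¹ * x * g * u) * g⁻¹ by group,
    show g * u * g⁻¹ * x = g * (u * (g⁻¹ * x * g)) * g⁻¹ by group,
    mul_right_cancel_iff, mul_left_cancel_iff]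

end Subgroup

namespace Matrix.GeneralLinearGroup

def diagOneNegOne (K : Type*) [CommRing K] : GL (Fin 2) K :=
  ⟨!![1, 0; 0, -1], !![1, 0; 0, -1], by simp [one_fin_two], by simp [one_fin_two]⟩

variable {K : Type*} [Field K]

theorem conj_eq_neg_of_mem_normalizer_centralizer (h2 : (2 : K) ≠ 0) {u g : GL (Fin 2) K}
    (hu : (u : Matrix (Fin 2) (Fin 2) K).trace = 0)
    (hgN : g ∈ normalizer (centralizer {u} : Set (GL (Fin 2) K))) (hgC : g ∉ centralizer {u}) :
    ((u * g * u⁻¹ : GL (Fin 2) K) : Matrix (Fin 2) (Fin 2) K) =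
      -(g : Matrix (Fin 2) (Fin 2) K) := by
  have hw : g * u * g⁻¹ ∈ centralizer {u} := (hgN u).1 (mem_centralizer_singleton_iff.2 rfl)
  obtain ⟨b, hb⟩ := exists_eq_smul_of_commute_of_trace_eq_zero h2 hu u.det_ne_zero
    (by rw [Units.val_mul, Units.val_mul, trace_units_conj, hu])
    (congrArg Units.val (mem_centralizer_singleton_iff.1 hw))
  have hb2 : b ^ 2 = 1 := by
    have hdet := congrArg Matrix.det hb
    rw [Units.val_mul, Units.val_mul, det_units_conj, det_smul, Fintype.card_fin] at hdet
    exact (mul_eq_right₀ u.det_ne_zero).1 hdet.symm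
  rcases sq_eq_one_iff.1 hb2 with rfl | rfl
  · rw [one_smul] at hb
    exact absurd (mem_centralizer_singleton_iff.2 (mul_inv_eq_iff_eq_mul.1 (Units.ext hb))) hgC
  · calc ((u * g * u⁻¹ : GL (Fin 2) K) : Matrix (Fin 2) (Fin 2) K)
        = -((g * u * g⁻¹ : GL (Fin 2) K) : Matrix (Fin 2) (Fin 2) K) * g * ↑u⁻¹ := by
          rw [hb, neg_one_smul, neg_neg, Units.val_mul, Units.val_mul]
      _ = -(g : Matrix (Fin 2) (Fin 2) K) := by simp [mul_assoc]

theorem mul_mem_centralizer_iff (h2 : (2 : K) ≠ 0) {u a b : GL (Fin 2) K}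
    (hu : (u : Matrix (Fin 2) (Fin 2) K).trace = 0)
    (ha : a ∈ normalizer (centralizer {u} : Set (GL (Fin 2) K)))
    (hb : b ∈ normalizer (centralizer {u} : Set (GL (Fin 2) K))) :
    a * b ∈ centralizer {u} ↔ (a ∈ centralizer {u} ↔ b ∈ centralizer {u}) := by
  by_cases haC : a ∈ centralizer {u}
  · simp only [haC, true_iff, mul_mem_cancel_left haC]
  by_cases hbC : b ∈ centralizer {u}
  · simp only [haC, hbC, iff_true, mul_mem_cancel_right hbC]
  simp only [haC, hbC, iff_self, iff_true]
  refine mem_centralizer_singleton_iff_conj.2 (Units.ext ?_)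
  calc ((u * (a * b) * u⁻¹ : GL (Fin 2) K) : Matrix (Fin 2) (Fin 2) K)
      = ((u * a * u⁻¹ : GL (Fin 2) K) : Matrix (Fin 2) (Fin 2) K) * ↑(u * b * u⁻¹) := by
        rw [← Units.val_mul]; group
    _ = ((a * b : GL (Fin 2) K) : Matrix (Fin 2) (Fin 2) K) := by
        rw [conj_eq_neg_of_mem_normalizer_centralizer h2 hu ha haC,
          conj_eq_neg_of_mem_normalizer_centralizer h2 hu hb hbC, neg_mul_neg, Units.val_mul]

end Matrix.GeneralLinearGroup

section Cartan

open Matrix.GeneralLinearGroup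

variable {p : ℕ} [Fact p.Prime]

theorem diagGL_eq_centralizer_diagOneNegOne (h2 : (2 : ZMod p) ≠ 0) :
    diagGL p = centralizer {diagOneNegOne (ZMod p)} := by
  ext g
  rw [mem_centralizer_singleton_iff, Units.ext_iff, Units.val_mul, Units.val_mul]
  constructor
  · rintro ⟨v, hv⟩
    ext i j
    fin_cases i <;> fin_cases j <;> simp [hv, diagOneNegOne, mul_apply]
  · intro hg
    obtain ⟨a, b, hab⟩ := Matrix.exists_eq_smul_one_add_smul_of_commute_s9 h2
      (by simp [diagOneNegOne]) (by simp [diagOneNegOne]) hg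
    refine ⟨![a + b, a - b], ?_⟩
    rw [hab]
    ext i j
    fin_cases i <;> fin_cases j <;> simp [diagOneNegOne, sub_eq_add_neg]

theorem unitsIn_eq_centralizer (h2 : (2 : ZMod p) ≠ 0)
    {A : Subalgebra (ZMod p) (Matrix (Fin 2) (Fin 2) (ZMod p))} {u : GL (Fin 2) (ZMod p)}
    (huA : (u : Matrix (Fin 2) (Fin 2) (ZMod p)) ∈ A)
    (hu : (u : Matrix (Fin 2) (Fin 2) (ZMod p)).trace = 0) (hA : ∀ a ∈ A, Commute a ↑u) :
    unitsIn p A = centralizer {u} := by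
  have hcent : ∀ g ∈ centralizer {u}, (g : Matrix (Fin 2) (Fin 2) (ZMod p)) ∈ A :=
    fun g hg => Matrix.mem_subalgebra_of_commute h2 huA hu u.det_ne_zero
      (Commute.units_val (mem_centralizer_singleton_iff.1 hg))
  ext g
  exact ⟨fun ⟨hg, _⟩ => mem_centralizer_singleton_iff.2 (Units.ext (hA _ hg)),
    fun hg => ⟨hcent g hg, hcent g⁻¹ (inv_mem hg)⟩⟩

theorem Subalgebra.ne_bot_of_card_eq_sq {R : Type*} [Ring R] [Nontrivial R] [Algebra (ZMod p) R]
    {A : Subalgebra (ZMod p) R} (hcard : Nat.card A = p ^ 2) : A ≠ ⊥ := by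
  rintro rfl
  rw [Nat.card_congr (Algebra.botEquiv (ZMod p) R).toEquiv, Nat.card_zmod] at hcard
  have := (Fact.out : p.Prime).one_lt
  nlinarith

theorem IsSplitCartan.exists_eq_centralizer (h2 : (2 : ZMod p) ≠ 0)
    {C : Subgroup (GL (Fin 2) (ZMod p))} (hC : IsSplitCartan p C) :
    ∃ u : GL (Fin 2) (ZMod p), (u : Matrix (Fin 2) (Fin 2) (ZMod p)).trace = 0 ∧
      C = centralizer {u} := by
  obtain ⟨g, rfl⟩ := hC
  refine ⟨g * diagOneNegOne (ZMod p) * g⁻¹, ?_, ?_⟩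
  · rw [Units.val_mul, Units.val_mul, trace_units_conj]
    simp [diagOneNegOne]
  · rw [diagGL_eq_centralizer_diagOneNegOne h2, map_conj_centralizer_singleton]

theorem IsNonsplitCartan.exists_eq_centralizer (h2 : (2 : ZMod p) ≠ 0)
    {C : Subgroup (GL (Fin 2) (ZMod p))} (hC : IsNonsplitCartan p C) :
    ∃ u : GL (Fin 2) (ZMod p), (u : Matrix (Fin 2) (Fin 2) (ZMod p)).trace = 0 ∧
      C = centralizer {u} := by
  obtain ⟨A, hF, hcard, rfl⟩ := hC
  let : Field A := hF.toField
  obtain ⟨x, hxA, hx⟩ :=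
    SetLike.exists_of_lt (bot_lt_iff_ne_bot.2 (Subalgebra.ne_bot_of_card_eq_sq hcard))
  set u := (2 : ZMod p) • x - x.trace • 1
  have huA : u ∈ A := A.sub_mem (A.smul_mem hxA 2) (A.smul_mem A.one_mem _)
  have htr : u.trace = 0 := by simp [u, trace_sub, trace_smul]; ring
  have hu0 : u ≠ 0 := by
    intro hu0
    refine hx (Algebra.mem_bot.2 ⟨2⁻¹ * x.trace, ?_⟩)
    rw [Algebra.algebraMap_eq_smul_one, mul_smul, ← sub_eq_zero.1 hu0, smul_smul,
      inv_mul_cancel₀ h2, one_smul]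
  have hdet : u.det ≠ 0 := by
    intro hdet
    have : (⟨u, huA⟩ : A) * ⟨u, huA⟩ = 0 :=
      Subtype.ext (by simp [Matrix.mul_self_eq_neg_det_smul_one_of_trace_eq_zero_s9 htr, hdet])
    exact hu0 (congrArg Subtype.val (mul_self_eq_zero.1 this))
  refine ⟨mkOfDetNeZero u hdet, htr, unitsIn_eq_centralizer h2 huA htr fun a ha => ?_⟩
  exact congrArg Subtype.val (mul_comm (⟨a, ha⟩ : A) ⟨u, huA⟩)

theorem IsCartan.exists_eq_centralizer (h2 : (2 : ZMod p) ≠ 0)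
    {C : Subgroup (GL (Fin 2) (ZMod p))} (hC : IsCartan p C) :
    ∃ u : GL (Fin 2) (ZMod p), (u : Matrix (Fin 2) (Fin 2) (ZMod p)).trace = 0 ∧
      C = centralizer {u} :=
  hC.elim (IsSplitCartan.exists_eq_centralizer h2) (IsNonsplitCartan.exists_eq_centralizer h2)

end Cartan

open Matrix.GeneralLinearGroup

theorem twist_self_of_in_normalizer_of_cartan_general (p : ℕ) [Fact p.Prime] (hp : Odd p)
    {G : Type*} [Group G] (ρ : G →* GL (Fin 2) (ZMod p))
    (C : Subgroup (GL (Fin 2) (ZMod p))) (hC : IsCartan p C)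
    (hin : ρ.range ≤ Subgroup.normalizer (C : Set (GL (Fin 2) (ZMod p))))
    (ε : G → ℤ)
    (hε : ∀ σ : G, (ρ σ ∈ C → ε σ = 1) ∧ (ρ σ ∉ C → ε σ = -1)) :
    (∀ σ τ : G, ε (σ * τ) = ε σ * ε τ) ∧
    ∃ A : GL (Fin 2) (ZMod p), ∀ σ : G,
      ((A * ρ σ * A⁻¹ : GL (Fin 2) (ZMod p)) : Matrix (Fin 2) (Fin 2) (ZMod p)) =
        ε σ • ((ρ σ : GL (Fin 2) (ZMod p)) : Matrix (Fin 2) (Fin 2) (ZMod p)) := by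
  have h2 : (2 : ZMod p) ≠ 0 :=
    Ring.two_ne_zero (by rw [ZMod.ringChar_zmod_n]; exact hp.ne_two_of_dvd_nat dvd_rfl)
  obtain ⟨u, hu, rfl⟩ := hC.exists_eq_centralizer h2
  have hN : ∀ σ, ρ σ ∈ normalizer (centralizer {u} : Set (GL (Fin 2) (ZMod p))) :=
    fun σ => hin ⟨σ, rfl⟩
  classical
  have hε' : ∀ σ, ε σ = if ρ σ ∈ centralizer {u} then 1 else -1 := fun σ => by
    split_ifs with h
    exacts [(hε σ).1 h, (hε σ).2 h]
  refine ⟨fun σ τ => ?_, u, fun σ => ?_⟩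
  · rw [hε', hε' σ, hε' τ, map_mul, mul_mem_centralizer_iff h2 hu (hN σ) (hN τ)]
    split_ifs <;> simp_all
  · by_cases hσ : ρ σ ∈ centralizer {u}
    · rw [(hε σ).1 hσ, one_smul, mem_centralizer_singleton_iff_conj.1 hσ]
    · rw [(hε σ).2 hσ, neg_one_zsmul,
        conj_eq_neg_of_mem_normalizer_centralizer h2 hu (hN σ) hσ]

theorem twist_self_of_in_normalizer_of_cartan (p : ℕ) [Fact p.Prime] (hp : Odd p)
    {G : Type*} [Group G] (ρ : G →* GL (Fin 2) (ZMod p))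
    (C : Subgroup (GL (Fin 2) (ZMod p))) (hC : IsCartan p C)
    (hin : ρ.range ≤ Subgroup.normalizer (C : Set (GL (Fin 2) (ZMod p)))) (hout : ¬ ρ.range ≤ C)
    (ε : G → ℤ)
    (hε : ∀ σ : G, (ρ σ ∈ C → ε σ = 1) ∧ (ρ σ ∉ C → ε σ = -1)) :
    (∀ σ τ : G, ε (σ * τ) = ε σ * ε τ) ∧
    ∃ A : GL (Fin 2) (ZMod p), ∀ σ : G,
      ((A * ρ σ * A⁻¹ : GL (Fin 2) (ZMod p)) : Matrix (Fin 2) (Fin 2) (ZMod p)) =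
        ε σ • ((ρ σ : GL (Fin 2) (ZMod p)) : Matrix (Fin 2) (Fin 2) (ZMod p)) :=
  twist_self_of_in_normalizer_of_cartan_general p hp ρ C hC hin ε hε
end

section
/- Let p be an odd prime and let N be a subgroup of PGL₂(𝔽_p) isomorphic to the Klein four-group C₂ × C₂. (a) If N ⊆ PSL₂(𝔽_p), then every element of order 2 in N lies in the image in PGL₂(𝔽_p) of a Cartan subgroup of GL₂(𝔽_p) whose normalizer has image containing N; moreover these Cartan subgroups can be taken split if p ≡ 1 (mod 4) and non-split if p ≡ 3 (mod 4). (b) If N ⊄ PSL₂(𝔽_p), then exactly one of the three elements of order 2 in N lies in PSL₂(𝔽_p); if p ≡ 1 (mod 4), that element lies in the image of a split Cartan subgroup and the other two lie in images of non-split Cartan subgroups, while if p ≡ 3 (mod 4), that element lies in the image of a non-split Cartan subgroup and the other two lie in images of split Cartan subgroups. -/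
open Matrix

open Matrix

/-- The group homomorphism `𝔽_p* → GL₂(𝔽_p)` sending `c` to the scalar matrix `c·I`. -/
def scalarHom (p : ℕ) : (ZMod p)ˣ →* GL (Fin 2) (ZMod p) :=
  Units.map (Matrix.scalar (Fin 2)).toMonoidHom

/-- The subgroup of scalar matrices in `GL₂(𝔽_p)`. -/
def scalarGL (p : ℕ) : Subgroup (GL (Fin 2) (ZMod p)) :=
  (scalarHom p).range

instance scalarGL_normal (p : ℕ) : (scalarGL p).Normal := by
  constructor
  rintro n ⟨u, rfl⟩ g
  refine ⟨u, ?_⟩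
  have hcomm : Commute ((Matrix.scalar (Fin 2)) (u : ZMod p))
      ((g : Matrix (Fin 2) (Fin 2) (ZMod p))) :=
    Matrix.scalar_commute _ (fun r => Commute.all _ r) _
  ext
  simp only [scalarHom, Units.val_mul, Units.coe_map, RingHom.toMonoidHom_eq_coe,
    MonoidHom.coe_coe]
  rw [← hcomm.eq, mul_assoc, ← Units.val_mul, mul_inv_cancel, Units.val_one, mul_one]

/-- `PGL₂(𝔽_p)`: the quotient of `GL₂(𝔽_p)` by its subgroup of scalar matrices. -/
abbrev PGL2 (p : ℕ) : Type := GL (Fin 2) (ZMod p) ⧸ scalarGL p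

/-- The projection `GL₂(𝔽_p) → PGL₂(𝔽_p)`. -/
def projGL (p : ℕ) : GL (Fin 2) (ZMod p) →* PGL2 p :=
  QuotientGroup.mk' (scalarGL p)

/-- `PSL₂(𝔽_p)`: the image of `SL₂(𝔽_p)` in `PGL₂(𝔽_p)`. -/
def PSL2 (p : ℕ) : Subgroup (PGL2 p) :=
  ((projGL p).comp Matrix.SpecialLinearGroup.toGL).range

/-!
An involution of `PGL₂(𝔽_p)` lifts to `g ∈ GL₂(𝔽_p)` with `g² = c` scalar and `g` not scalar;
Cayley–Hamilton then gives `tr g = 0` and `det g = -c`, so the involution lies in `PSL₂(𝔽_p)`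
iff `-c` is a square. The units of `𝔽_p[g] ≅ 𝔽_p[X]/(X² - c)` form a Cartan subgroup containing
`g`: a field of order `p²` if `c` is not a square, and diagonal in an eigenbasis of `g` if
`c = d²`. An element whose image commutes with that of `g` conjugates `g` to a scalar multiple
of `g`, hence normalizes `𝔽_p[g]`. As `c = (-1)(-c)` and `-1` is a square iff `p ≡ 1 (mod 4)`,
the type of the Cartan subgroup is read off from `p mod 4` and membership in `PSL₂(𝔽_p)`.
For (b), the quadratic character of the determinant is a character of `PGL₂(𝔽_p)` with kernel
`PSL₂(𝔽_p)`; it is nontrivial on `N`, so its kernel in `N` has order `2`.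
-/

namespace Matrix

section CommRing

variable {K : Type*} [CommRing K]

theorem adjugate_fin_two_eq_trace_smul_sub (M : Matrix (Fin 2) (Fin 2) K) :
    M.adjugate = M.trace • 1 - M := by
  ext i j
  fin_cases i <;> fin_cases j <;> simp [adjugate_fin_two, trace_fin_two]

theorem inv_mem_subalgebra_of_fin_two {A : Subalgebra K (Matrix (Fin 2) (Fin 2) K)}
    {M : Matrix (Fin 2) (Fin 2) K} (hM : M ∈ A) : M⁻¹ ∈ A := by
  rw [inv_def, adjugate_fin_two_eq_trace_smul_sub]
  exact A.smul_mem (A.sub_mem (A.smul_mem A.one_mem _) hM) _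

end CommRing

variable {K : Type*} [Field K]

theorem trace_eq_zero_and_det_eq_neg_of_mul_self {M : Matrix (Fin 2) (Fin 2) K} {c : K}
    (hM : M * M = c • 1) (hns : ∀ t : K, M ≠ t • 1) : M.trace = 0 ∧ M.det = -c := by
  have hCH : M * M - M.trace • M + M.det • 1 = 0 := by
    simpa [charpoly_fin_two, sq, Algebra.smul_def] using aeval_self_charpoly M
  have hlin : M.trace • M = (c + M.det) • 1 := by
    rw [hM] at hCH
    linear_combination (norm := module) -hCH
  have htr : M.trace = 0 := by
    by_contra h
    apply hns (M.trace⁻¹ * (c + M.det))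
    rw [← smul_smul, ← hlin, smul_smul, inv_mul_cancel₀ h, one_smul]
  refine ⟨htr, ?_⟩
  rw [htr, zero_smul] at hlin
  linear_combination (smul_eq_zero.mp hlin.symm).resolve_right one_ne_zero

theorem exists_mul_eq_mul_diagonal {M : Matrix (Fin 2) (Fin 2) K} {d : K}
    (hM : M * M = (d * d) • 1) (htr : M.trace = 0) (h2 : (2 : K) ≠ 0) (hd : d ≠ 0) :
    ∃ P : GL (Fin 2) K, M * P = P * diagonal ![d, -d] := by
  obtain ⟨a, b, e, f, rfl⟩ : ∃ a b e f, M = !![a, b; e, f] := ⟨_, _, _, _, eta_fin_two M⟩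
  obtain rfl : f = -a := by rw [trace_fin_two_of] at htr; linear_combination htr
  have habe : a * a + b * e = d * d := by
    simpa [mul_fin_two, one_fin_two] using congrFun (congrFun hM 0) 0
  -- The columns of `M + d` are `d`-eigenvectors and those of `M - d` are `(-d)`-eigenvectors;
  -- one of the two ways of pairing them up gives an invertible `P`.
  by_cases had : a + d = 0
  · have hdet : det !![b, a - d; d - a, e] ≠ 0 := by
      rw [show det !![b, a - d; d - a, e] = 2 * d * (2 * d) by rw [det_fin_two_of]; grind]
      exact mul_ne_zero (mul_ne_zero h2 hd) (mul_ne_zero h2 hd)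
    refine ⟨.mkOfDetNeZero _ hdet, ?_⟩
    ext i j
    fin_cases i <;> fin_cases j <;> simp [GeneralLinearGroup.mkOfDetNeZero] <;> grind
  · have hdet : det !![a + d, b; e, -(a + d)] ≠ 0 := by
      rw [show det !![a + d, b; e, -(a + d)] = -(2 * d * (a + d)) by
        rw [det_fin_two_of]; linear_combination -habe]
      exact neg_ne_zero.mpr (mul_ne_zero (mul_ne_zero h2 hd) had)
    refine ⟨.mkOfDetNeZero _ hdet, ?_⟩
    ext i j
    fin_cases i <;> fin_cases j <;> simp [GeneralLinearGroup.mkOfDetNeZero] <;> grind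

end Matrix

section SquareRootOfScalar

variable {K R : Type*} [Ring R]

theorem smul_one_add_smul_mul_smul_one_add_smul [CommRing K] [Algebra K R] {x : R} {c : K}
    (hx : x * x = c • 1) (a b a' b' : K) :
    (a • 1 + b • x) * (a' • 1 + b' • x) = (a * a' + b * b' * c) • 1 + (a * b' + b * a') • x := by
  simp only [add_mul, mul_add, smul_mul_smul, one_mul, mul_one, hx, smul_smul]
  module

theorem smul_one_add_smul_injective [Field K] [Module K R] {x : R} (hns : ∀ t : K, x ≠ t • 1) :
    Function.Injective fun ab : K × K => ab.1 • (1 : R) + ab.2 • x := by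
  have : Nontrivial R := ⟨⟨x, (0 : K) • 1, hns 0⟩⟩
  rintro ⟨a, b⟩ ⟨a', b'⟩ h
  simp only at h
  obtain rfl : b = b' := by
    by_contra hb
    apply hns ((a' - a) / (b - b'))
    rw [div_eq_inv_mul, ← smul_smul, eq_inv_smul_iff₀ (sub_ne_zero.mpr hb)]
    linear_combination (norm := module) h
  obtain rfl : a = a' := by
    have : (a - a') • (1 : R) = 0 := by linear_combination (norm := module) h
    exact sub_eq_zero.mp ((smul_eq_zero.mp this).resolve_right one_ne_zero)
  rfl

namespace Algebra

theorem mem_adjoin_singleton_iff_of_mul_self [CommRing K] [Algebra K R] {x : R} {c : K}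
    (hx : x * x = c • 1) {y : R} : y ∈ adjoin K {x} ↔ ∃ a b : K, a • 1 + b • x = y := by
  constructor
  · intro hy
    induction hy using adjoin_induction with
    | mem z hz => exact ⟨0, 1, by rw [Set.mem_singleton_iff.mp hz]; module⟩
    | algebraMap r => exact ⟨r, 0, by rw [algebraMap_eq_smul_one]; module⟩
    | add _ _ _ _ h₁ h₂ =>
      obtain ⟨a, b, rfl⟩ := h₁
      obtain ⟨a', b', rfl⟩ := h₂
      exact ⟨a + a', b + b', by module⟩
    | mul _ _ _ _ h₁ h₂ =>
      obtain ⟨a, b, rfl⟩ := h₁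
      obtain ⟨a', b', rfl⟩ := h₂
      exact ⟨_, _, (smul_one_add_smul_mul_smul_one_add_smul hx a b a' b').symm⟩
  · rintro ⟨a, b, rfl⟩
    exact add_mem (Subalgebra.smul_mem _ (one_mem _) a)
      (Subalgebra.smul_mem _ (self_mem_adjoin_singleton K x) b)

variable [Field K] [Algebra K R] {x : R} {c : K}

theorem card_adjoin_of_mul_self (hx : x * x = c • 1) (hns : ∀ t : K, x ≠ t • 1) :
    Nat.card (adjoin K {x}) = Nat.card K ^ 2 := by
  let f : K × K → adjoin K {x} := fun ab =>
    ⟨ab.1 • 1 + ab.2 • x, (mem_adjoin_singleton_iff_of_mul_self hx).mpr ⟨_, _, rfl⟩⟩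
  have hf : Function.Bijective f := by
    refine ⟨fun ab ab' h => smul_one_add_smul_injective hns (congrArg Subtype.val h), ?_⟩
    rintro ⟨y, hy⟩
    obtain ⟨a, b, rfl⟩ := (mem_adjoin_singleton_iff_of_mul_self hx).mp hy
    exact ⟨(a, b), rfl⟩
  rw [← Nat.card_eq_of_bijective f hf, Nat.card_prod, sq]

theorem isField_adjoin_of_mul_self [Nontrivial R] (hx : x * x = c • 1) (hc : ¬IsSquare c) :
    IsField (adjoin K {x}) := by
  have hmem := fun {y : R} => mem_adjoin_singleton_iff_of_mul_self (K := K) (y := y) hx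
  have hmul := smul_one_add_smul_mul_smul_one_add_smul hx
  refine ⟨⟨0, 1, zero_ne_one⟩, ?_, ?_⟩
  · rintro ⟨_, hy⟩ ⟨_, hz⟩
    obtain ⟨a, b, rfl⟩ := hmem.mp hy
    obtain ⟨a', b', rfl⟩ := hmem.mp hz
    ext
    simp only [Subalgebra.coe_mul, hmul]
    ring_nf
  · rintro ⟨_, hy⟩ hy0
    obtain ⟨a, b, rfl⟩ := hmem.mp hy
    -- the norm `(a + b x) (a - b x) = a² - b² c` vanishes only at `a = b = 0`
    have hn : a * a - b * b * c ≠ 0 := by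
      intro hn
      by_cases hb : b = 0
      · subst hb
        obtain rfl : a = 0 := mul_self_eq_zero.mp (by simpa using hn)
        exact hy0 (Subtype.ext (by simp))
      · exact hc ⟨a / b, by field_simp; linear_combination -hn⟩
    set n := a * a - b * b * c
    refine ⟨⟨(a / n) • 1 + (-b / n) • x, hmem.mpr ⟨_, _, rfl⟩⟩, Subtype.ext ?_⟩
    rw [Subalgebra.coe_mul, hmul, Subalgebra.coe_one,
      show a * (a / n) + b * (-b / n) * c = 1 by field_simp; ring,
      show a * (-b / n) + b * (a / n) = 0 by ring, one_smul, zero_smul, add_zero]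

end Algebra

end SquareRootOfScalar

theorem isSquare_mul_iff_of_ne_zero {F : Type*} [Field F] [Fintype F] {a b : F}
    (ha : a ≠ 0) (hb : b ≠ 0) : IsSquare (a * b) ↔ (IsSquare a ↔ IsSquare b) := by
  classical
  rw [← quadraticChar_one_iff_isSquare (mul_ne_zero ha hb), ← quadraticChar_one_iff_isSquare ha,
    ← quadraticChar_one_iff_isSquare hb, map_mul]
  rcases quadraticChar_dichotomy ha with h | h <;>
    rcases quadraticChar_dichotomy hb with h' | h' <;> simp [h, h']

theorem ZMod.isSquare_neg_one_iff_mod_four_eq_one {p : ℕ} [Fact p.Prime] (hp : Odd p) :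
    IsSquare (-1 : ZMod p) ↔ p % 4 = 1 := by
  rw [ZMod.exists_sq_eq_neg_one_iff]
  have := Nat.odd_iff.mp hp
  omega

section KleinFour

variable {G : Type*} [Group G]

instance : IsKleinFour (Multiplicative (ZMod 2) × Multiplicative (ZMod 2)) where
  card_four := by rw [Nat.card_eq_fintype_card]; rfl
  exponent_two := by simp [Monoid.exponent_prod]

theorem IsKleinFour.of_mulEquiv {H : Type*} [Group H] [IsKleinFour H] (e : G ≃* H) :
    IsKleinFour G where
  card_four := by rw [Nat.card_congr e.toEquiv, IsKleinFour.card_four]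
  exponent_two := by rw [Monoid.exponent_eq_of_mulEquiv e, IsKleinFour.exponent_two]

theorem existsUnique_ne_one_mem_ker (hG : Nat.card G = 4) {f : G →* ℤˣ} {y : G} (hy : f y ≠ 1) :
    ∃! x : G, x ≠ 1 ∧ f x = 1 := by
  have hsurj : Function.Surjective f := fun w => (Int.units_eq_one_or w).elim
    (fun h => ⟨1, by rw [h, map_one]⟩)
    (fun h => ⟨y, by rw [h]; exact (Int.units_eq_one_or _).resolve_left hy⟩)
  have hker : Nat.card f.ker = 2 := by
    have h := f.ker.card_mul_index
    rw [Subgroup.index_ker, MonoidHom.range_eq_top.mpr hsurj, Subgroup.card_top,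
      Nat.card_eq_fintype_card (α := ℤˣ), Fintype.card_units_int, hG] at h
    omega
  obtain ⟨⟨x, hx⟩, hx1, huniq⟩ := (Nat.card_eq_two_iff' 1).mp hker
  refine ⟨x, ⟨fun h => hx1 (Subtype.ext h), hx⟩, fun z ⟨hz1, hz⟩ => ?_⟩
  exact congrArg Subtype.val (huniq ⟨z, hz⟩ fun h => hz1 (congrArg Subtype.val h))

theorem IsKleinFour.exists_orderOf_eq_two_mem_ker_unique {N : Subgroup G} [IsKleinFour N]
    {f : G →* ℤˣ} (hN : ¬N ≤ f.ker) :
    ∃ x ∈ N, orderOf x = 2 ∧ x ∈ f.ker ∧ ∀ y ∈ N, orderOf y = 2 → y ∈ f.ker → y = x := by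
  obtain ⟨y, hyN, hy⟩ := SetLike.not_le_iff_exists.mp hN
  obtain ⟨x, ⟨hx1, hx⟩, huniq⟩ := existsUnique_ne_one_mem_ker (f := f.comp N.subtype)
    (y := ⟨y, hyN⟩) IsKleinFour.card_four hy
  have hx2 : orderOf x = 2 := orderOf_eq_prime (by rw [sq, IsKleinFour.mul_self]) hx1
  refine ⟨x, x.2, by rwa [Subgroup.orderOf_coe], hx, fun z hzN hz2 hz => ?_⟩
  have hz1 : (⟨z, hzN⟩ : N) ≠ 1 := fun h => by
    rw [← Subgroup.orderOf_mk z hzN, h, orderOf_one] at hz2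
    omega
  exact congrArg Subtype.val (huniq ⟨z, hzN⟩ ⟨hz1, hz⟩)

end KleinFour

noncomputable def detSquareClass (p : ℕ) [Fact p.Prime] : PGL2 p →* ℤˣ :=
  QuotientGroup.lift (scalarGL p)
    ((quadraticChar (ZMod p)).toUnitHom.comp GeneralLinearGroup.det) <| by
    rintro _ ⟨u, rfl⟩
    rw [MonoidHom.mem_ker, MonoidHom.comp_apply,
      show scalarHom p u = GeneralLinearGroup.scalar (Fin 2) u from rfl,
      GeneralLinearGroup.det_scalar, map_pow, Fintype.card_fin, Int.units_sq]

section PGL2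

variable {p : ℕ}

local notation "𝕄" => Matrix (Fin 2) (Fin 2) (ZMod p)

def unitsAdjoin (g : GL (Fin 2) (ZMod p)) : Subgroup (GL (Fin 2) (ZMod p)) :=
  unitsIn p (Algebra.adjoin (ZMod p) {(g : 𝕄)})

theorem scalarHom_val (u : (ZMod p)ˣ) : (scalarHom p u : 𝕄) = (u : ZMod p) • 1 := by
  ext i j
  simp [scalarHom, Matrix.scalar_apply, Matrix.diagonal, Matrix.one_apply]

theorem mem_unitsIn_iff {A : Subalgebra (ZMod p) 𝕄} {u : GL (Fin 2) (ZMod p)} :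
    u ∈ unitsIn p A ↔ (u : 𝕄) ∈ A :=
  ⟨And.left, fun hu => ⟨hu, by rw [coe_units_inv]; exact inv_mem_subalgebra_of_fin_two hu⟩⟩

theorem projGL_surjective : Function.Surjective (projGL p) :=
  QuotientGroup.mk'_surjective _

theorem projGL_eq_one_iff {g : GL (Fin 2) (ZMod p)} : projGL p g = 1 ↔ ∃ u, scalarHom p u = g :=
  QuotientGroup.eq_one_iff g

variable [Fact p.Prime]

theorem projGL_mem_PSL2_iff (g : GL (Fin 2) (ZMod p)) :
    projGL p g ∈ PSL2 p ↔ IsSquare (g : 𝕄).det := by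
  constructor
  · rintro ⟨S, hS⟩
    obtain ⟨_, ⟨u, rfl⟩, hSu⟩ := (QuotientGroup.mk'_eq_mk' _).mp hS
    refine ⟨u, ?_⟩
    rw [← hSu, Units.val_mul, det_mul, scalarHom_val, det_smul, det_one]
    simp [sq]
  · rintro ⟨r, hr⟩
    have hr0 : r ≠ 0 := by
      rintro rfl
      exact GeneralLinearGroup.det_ne_zero g (by rw [hr, mul_zero])
    let S : SpecialLinearGroup (Fin 2) (ZMod p) :=
      ⟨r⁻¹ • (g : 𝕄), by rw [det_smul, hr, Fintype.card_fin]; field_simp⟩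
    refine ⟨S, (QuotientGroup.mk'_eq_mk' _).mpr ⟨_, ⟨Units.mk0 r hr0, rfl⟩, Units.ext ?_⟩⟩
    rw [Units.val_mul, scalarHom_val, Units.val_mk0, mul_smul_comm, mul_one]
    exact smul_inv_smul₀ hr0 (g : 𝕄)

theorem PSL2_eq_ker : PSL2 p = (detSquareClass p).ker := by
  ext x
  obtain ⟨g, rfl⟩ := projGL_surjective x
  rw [projGL_mem_PSL2_iff, MonoidHom.mem_ker,
    ← quadraticChar_one_iff_isSquare (GeneralLinearGroup.det_ne_zero g), Units.ext_iff]
  rfl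

theorem exists_orderOf_eq_two_mem_PSL2_unique {N : Subgroup (PGL2 p)} [IsKleinFour N]
    (hN : ¬N ≤ PSL2 p) :
    ∃ x ∈ N, orderOf x = 2 ∧ x ∈ PSL2 p ∧ ∀ y ∈ N, orderOf y = 2 → y ∈ PSL2 p → y = x := by
  rw [PSL2_eq_ker] at hN ⊢
  exact IsKleinFour.exists_orderOf_eq_two_mem_ker_unique hN

variable {g : GL (Fin 2) (ZMod p)} {c : ZMod p}

theorem mem_unitsAdjoin_iff (hg : (g : 𝕄) * g = c • 1) {u : GL (Fin 2) (ZMod p)} :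
    u ∈ unitsAdjoin g ↔ ∃ a b : ZMod p, a • 1 + b • (g : 𝕄) = u := by
  rw [unitsAdjoin, mem_unitsIn_iff, Algebra.mem_adjoin_singleton_iff_of_mul_self hg]

theorem isNonsplitCartan_unitsAdjoin (hg : (g : 𝕄) * g = c • 1)
    (hns : ∀ t : ZMod p, (g : 𝕄) ≠ t • 1) (hc : ¬IsSquare c) :
    IsNonsplitCartan p (unitsAdjoin g) :=
  ⟨_, Algebra.isField_adjoin_of_mul_self hg hc,
    by rw [Algebra.card_adjoin_of_mul_self hg hns, Nat.card_zmod], rfl⟩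

theorem isSplitCartan_unitsAdjoin (h2 : (2 : ZMod p) ≠ 0) (hg : (g : 𝕄) * g = c • 1)
    (hns : ∀ t : ZMod p, (g : 𝕄) ≠ t • 1) (hc : IsSquare c) :
    IsSplitCartan p (unitsAdjoin g) := by
  obtain ⟨d, rfl⟩ := hc
  have hd : d ≠ 0 := by
    rintro rfl
    apply (g * g).ne_zero
    rw [Units.val_mul, hg, mul_zero, zero_smul]
  obtain ⟨P, hP⟩ :=
    exists_mul_eq_mul_diagonal hg (trace_eq_zero_and_det_eq_neg_of_mul_self hg hns).1 h2 hd
  have hconj (a b : ZMod p) :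
      (↑P⁻¹ : 𝕄) * (a • 1 + b • ↑g) * (↑P : 𝕄) = a • 1 + b • diagonal ![d, -d] := by
    rw [mul_add, add_mul, mul_smul_comm, smul_mul_assoc, mul_smul_comm, smul_mul_assoc, mul_one,
      mul_assoc, hP, ← mul_assoc, ← Units.val_mul, inv_mul_cancel, Units.val_one, one_mul]
  refine ⟨P, Subgroup.ext fun u => ?_⟩
  rw [mem_unitsAdjoin_iff hg, Subgroup.mem_map_equiv, MulAut.conj_symm_apply]
  constructor
  · rintro ⟨a, b, hu⟩
    refine ⟨![a + b * d, a - b * d], ?_⟩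
    rw [Units.val_mul, Units.val_mul, ← hu, hconj]
    ext i j
    fin_cases i <;> fin_cases j <;> simp [sub_eq_add_neg]
  · rintro ⟨v, hv⟩
    refine ⟨(v 0 + v 1) / 2, (v 0 - v 1) / (2 * d), ?_⟩
    have hv' : diagonal v =
        ((v 0 + v 1) / 2) • 1 + ((v 0 - v 1) / (2 * d)) • diagonal ![d, -d] := by
      ext i j
      fin_cases i <;> fin_cases j <;> simp <;> field_simp <;> ring
    rw [Units.val_mul, Units.val_mul, hv', ← hconj] at hv
    exact (Units.mul_right_inj P⁻¹).mp ((Units.mul_left_inj P).mp hv).symm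

theorem conj_mem_unitsAdjoin (hg : (g : 𝕄) * g = c • 1) {h u : GL (Fin 2) (ZMod p)}
    (hcomm : Commute (projGL p g) (projGL p h)) (hu : u ∈ unitsAdjoin g) :
    h * u * h⁻¹ ∈ unitsAdjoin g := by
  have hproj : projGL p g = projGL p (h * g * h⁻¹) := by
    rw [map_mul, map_mul, map_inv, ← hcomm.eq, mul_inv_cancel_right]
  obtain ⟨_, ⟨w, rfl⟩, hw⟩ := (QuotientGroup.mk'_eq_mk' _).mp hproj
  have hconj : (h : 𝕄) * (g : 𝕄) * (↑(h⁻¹) : 𝕄) = (w : ZMod p) • (g : 𝕄) := by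
    rw [← Units.val_mul, ← Units.val_mul, ← hw, Units.val_mul, scalarHom_val, mul_smul_comm,
      mul_one]
  obtain ⟨a, b, hab⟩ := (mem_unitsAdjoin_iff hg).mp hu
  refine (mem_unitsAdjoin_iff hg).mpr ⟨a, b * w, ?_⟩
  calc a • 1 + (b * w) • (g : 𝕄)
      = a • ((h : 𝕄) * ↑(h⁻¹)) + b • ((h : 𝕄) * (g : 𝕄) * ↑(h⁻¹)) := by
        rw [hconj, smul_smul, ← Units.val_mul, mul_inv_cancel, Units.val_one]
    _ = ↑(h * u * h⁻¹) := by
        rw [Units.val_mul, Units.val_mul, ← hab]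
        simp only [mul_add, add_mul, mul_smul_comm, smul_mul_assoc, mul_one]

theorem mem_normalizer_unitsAdjoin (hg : (g : 𝕄) * g = c • 1) {h : GL (Fin 2) (ZMod p)}
    (hcomm : Commute (projGL p g) (projGL p h)) :
    h ∈ Subgroup.normalizer (unitsAdjoin g : Set (GL (Fin 2) (ZMod p))) := by
  refine Subgroup.mem_normalizer_iff.mpr fun u => ⟨conj_mem_unitsAdjoin hg hcomm, fun hu => ?_⟩
  have hcomm' : Commute (projGL p g) (projGL p h⁻¹) := by rw [map_inv]; exact hcomm.inv_right
  simpa [mul_assoc] using conj_mem_unitsAdjoin hg hcomm' hu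

theorem exists_lift_of_orderOf_eq_two {x : PGL2 p} (hx : orderOf x = 2) :
    ∃ (g : GL (Fin 2) (ZMod p)) (c : ZMod p), projGL p g = x ∧ (g : 𝕄) * g = c • 1 ∧
      ∀ t : ZMod p, (g : 𝕄) ≠ t • 1 := by
  obtain ⟨g, rfl⟩ := projGL_surjective x
  have hx1 : projGL p g ≠ 1 := fun h => by rw [h, orderOf_one] at hx; omega
  obtain ⟨u, hu⟩ := projGL_eq_one_iff.mp
    (show projGL p (g * g) = 1 by rw [map_mul, ← sq, ← orderOf_dvd_iff_pow_eq_one, hx])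
  refine ⟨g, u, rfl, by rw [← Units.val_mul, ← hu, scalarHom_val], fun t ht => hx1 ?_⟩
  have ht0 : t ≠ 0 := by
    rintro rfl
    exact g.ne_zero (by rw [ht, zero_smul])
  exact projGL_eq_one_iff.mpr
    ⟨Units.mk0 t ht0, Units.ext (by rw [scalarHom_val, ht, Units.val_mk0])⟩

theorem exists_cartan_of_orderOf_eq_two (hp : Odd p) {x : PGL2 p} (hx : orderOf x = 2) :
    ∃ C : Subgroup (GL (Fin 2) (ZMod p)), x ∈ C.map (projGL p) ∧
      (∀ y, Commute x y →
        y ∈ (Subgroup.normalizer (C : Set (GL (Fin 2) (ZMod p)))).map (projGL p)) ∧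
      ((x ∈ PSL2 p ↔ p % 4 = 1) → IsSplitCartan p C) ∧
      ((x ∈ PSL2 p ↔ p % 4 = 3) → IsNonsplitCartan p C) := by
  obtain ⟨g, c, rfl, hg, hns⟩ := exists_lift_of_orderOf_eq_two hx
  have hdet := (trace_eq_zero_and_det_eq_neg_of_mul_self hg hns).2
  have hc : c ≠ 0 := fun h => GeneralLinearGroup.det_ne_zero g (by rw [hdet, h, neg_zero])
  have hsq : IsSquare c ↔ (projGL p g ∈ PSL2 p ↔ p % 4 = 1) := by
    rw [projGL_mem_PSL2_iff, hdet, ← ZMod.isSquare_neg_one_iff_mod_four_eq_one hp,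
      ← isSquare_mul_iff_of_ne_zero (neg_ne_zero.mpr hc) (neg_ne_zero.mpr one_ne_zero),
      neg_mul_neg, mul_one]
  have h2 : (2 : ZMod p) ≠ 0 := Ring.two_ne_zero <| by
    rw [ZMod.ringChar_zmod_n]
    rintro rfl
    exact absurd hp (by decide)
  refine ⟨unitsAdjoin g, ⟨g, (mem_unitsAdjoin_iff hg).mpr ⟨0, 1, by simp⟩, rfl⟩, fun y hy => ?_,
    fun h => isSplitCartan_unitsAdjoin h2 hg hns (hsq.mpr h),
    fun h => isNonsplitCartan_unitsAdjoin hg hns fun hc => ?_⟩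
  · obtain ⟨h, rfl⟩ := projGL_surjective y
    exact ⟨h, mem_normalizer_unitsAdjoin hg hy, rfl⟩
  · have h31 : p % 4 = 3 ↔ ¬p % 4 = 1 := by
      have := Nat.odd_iff.mp hp
      constructor <;> intro <;> omega
    have := hsq.mp hc
    tauto

end PGL2

theorem klein_four_in_pgl2 (p : ℕ) [Fact p.Prime] (hp : Odd p) (N : Subgroup (PGL2 p))
    (hN : Nonempty (↥N ≃* Multiplicative (ZMod 2) × Multiplicative (ZMod 2))) :
    (N ≤ PSL2 p →
      ∀ x ∈ N, orderOf x = 2 →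
        ∃ C : Subgroup (GL (Fin 2) (ZMod p)), IsCartan p C ∧
          (p % 4 = 1 → IsSplitCartan p C) ∧ (p % 4 = 3 → IsNonsplitCartan p C) ∧
          x ∈ Subgroup.map (projGL p) C ∧ N ≤ Subgroup.map (projGL p) (Subgroup.normalizer (C : Set (GL (Fin 2) (ZMod p))))) ∧
    (¬ N ≤ PSL2 p →
      ∃ x ∈ N, orderOf x = 2 ∧ x ∈ PSL2 p ∧
        (∀ y ∈ N, orderOf y = 2 → y ∈ PSL2 p → y = x) ∧
        (p % 4 = 1 →
          (∃ C : Subgroup (GL (Fin 2) (ZMod p)), IsSplitCartan p C ∧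
            x ∈ Subgroup.map (projGL p) C) ∧
          (∀ y ∈ N, orderOf y = 2 → y ≠ x →
            ∃ C : Subgroup (GL (Fin 2) (ZMod p)), IsNonsplitCartan p C ∧
              y ∈ Subgroup.map (projGL p) C)) ∧
        (p % 4 = 3 →
          (∃ C : Subgroup (GL (Fin 2) (ZMod p)), IsNonsplitCartan p C ∧
            x ∈ Subgroup.map (projGL p) C) ∧
          (∀ y ∈ N, orderOf y = 2 → y ≠ x →
            ∃ C : Subgroup (GL (Fin 2) (ZMod p)), IsSplitCartan p C ∧
              y ∈ Subgroup.map (projGL p) C))) := by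
  obtain ⟨e⟩ := hN
  have := IsKleinFour.of_mulEquiv e
  have h4 : p % 4 = 1 ∨ p % 4 = 3 := by have := Nat.odd_iff.mp hp; omega
  refine ⟨fun hle x hxN hx => ?_, fun hnle => ?_⟩
  · obtain ⟨C, hxC, hnorm, hsplit, hnonsplit⟩ := exists_cartan_of_orderOf_eq_two hp hx
    have hxPSL := hle hxN
    refine ⟨C, h4.imp (fun h => hsplit (iff_of_true hxPSL h))
        (fun h => hnonsplit (iff_of_true hxPSL h)),
      fun h => hsplit (iff_of_true hxPSL h), fun h => hnonsplit (iff_of_true hxPSL h), hxC,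
      fun y hyN => hnorm y ?_⟩
    exact congrArg Subtype.val (IsKleinFour.isMulCommutative.is_comm.comm ⟨x, hxN⟩ ⟨y, hyN⟩)
  · obtain ⟨x, hxN, hx, hxPSL, huniq⟩ := exists_orderOf_eq_two_mem_PSL2_unique hnle
    have hyPSL : ∀ y ∈ N, orderOf y = 2 → y ≠ x → y ∉ PSL2 p :=
      fun y hyN hy hyx hyPSL => hyx (huniq y hyN hy hyPSL)
    obtain ⟨C, hxC, -, hsplit, hnonsplit⟩ := exists_cartan_of_orderOf_eq_two hp hx
    refine ⟨x, hxN, hx, hxPSL, huniq,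
      fun h => ⟨⟨C, hsplit (iff_of_true hxPSL h), hxC⟩, fun y hyN hy hyx => ?_⟩,
      fun h => ⟨⟨C, hnonsplit (iff_of_true hxPSL h), hxC⟩, fun y hyN hy hyx => ?_⟩⟩
    · obtain ⟨C', hyC', -, -, hnonsplit'⟩ := exists_cartan_of_orderOf_eq_two hp hy
      exact ⟨C', hnonsplit' (iff_of_false (hyPSL y hyN hy hyx) (by omega)), hyC'⟩
    · obtain ⟨C', hyC', -, hsplit', -⟩ := exists_cartan_of_orderOf_eq_two hp hy
      exact ⟨C', hsplit' (iff_of_false (hyPSL y hyN hy hyx) (by omega)), hyC'⟩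
end

section
/- Let K be a number field in which −1 is not a square, and let u ∈ K*. Then u is a fourth power in the quadratic extension K(√−1) if and only if there exists v ∈ K* with u = v⁴ or u = −4·v⁴. -/
/-!
Since `i² = -1` and `-1` is not a square in `K`, every element of `L` is uniquely `c + d i`
with `c, d ∈ K`. Then `(c + d i)⁴ = (c⁴ - 6c²d² + d⁴) + 4cd(c² - d²) i`, so `(c + d i)⁴ ∈ K` forces
`cd(c - d)(c + d) = 0`; the cases `cd = 0` give a fourth power and `d = ±c` give `-4c⁴`.
Conversely `-4 = (1 + i)⁴`.
-/

open Polynomial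

section

variable {K L : Type*} [CommRing K]

theorem isIntegral_of_sq_eq_algebraMap [Ring L] [Algebra K L] {x : L} {c : K}
    (hx : x ^ 2 = algebraMap K L c) : IsIntegral K x :=
  ⟨X ^ 2 - C c, monic_X_pow_sub_C c two_ne_zero, by simp [hx]⟩

theorem exists_eq_algebraMap_add_algebraMap_mul_of_mem_adjoin [Nontrivial K] [CommRing L]
    [Algebra K L] {x : L} {c : K} (hx : x ^ 2 = algebraMap K L c) {w : L} (hw : w ∈ Algebra.adjoin K {x}) :
    ∃ a b : K, w = algebraMap K L a + algebraMap K L b * x := by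
  rw [Algebra.adjoin_singleton_eq_range_aeval] at hw
  obtain ⟨p, rfl⟩ := hw
  have hmonic : (X ^ 2 - C c).Monic := monic_X_pow_sub_C c two_ne_zero
  have hroot : aeval x (X ^ 2 - C c) = 0 := by simp [hx]
  have hdeg : (p %ₘ (X ^ 2 - C c)).degree ≤ 1 := by
    have hlt := degree_modByMonic_lt p hmonic
    rw [degree_X_pow_sub_C two_pos] at hlt
    exact Order.le_of_lt_succ hlt
  refine ⟨(p %ₘ (X ^ 2 - C c)).coeff 0, (p %ₘ (X ^ 2 - C c)).coeff 1, ?_⟩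
  rw [AlgHom.toRingHom_eq_coe, RingHom.coe_coe, ← aeval_modByMonic_eq_self_of_root hroot,
    eq_X_add_C_of_degree_le_one hdeg]
  simp [add_comm]

end

section

variable {K L : Type*} [Field K] [Nontrivial L]

theorem notMem_range_algebraMap_of_sq_eq_neg_one [Ring L] [Algebra K L]
    (hK : ¬ IsSquare (-1 : K)) {i : L} (hi : i ^ 2 = -1) :
    i ∉ Set.range (algebraMap K L) := by
  rintro ⟨a, rfl⟩
  exact hK ⟨a, (algebraMap K L).injective (by simpa [← sq] using hi.symm)⟩

theorem algebraMap_add_algebraMap_mul_inj [CommRing L] [Algebra K L] {x : L}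
    (hx : x ∉ Set.range (algebraMap K L)) {a b a' b' : K}
    (h : algebraMap K L a + algebraMap K L b * x = algebraMap K L a' + algebraMap K L b' * x) :
    a = a' ∧ b = b' := by
  have hb : b = b' := by
    by_contra hb
    have hunit : IsUnit (algebraMap K L (b - b')) :=
      (isUnit_iff_ne_zero.mpr (sub_ne_zero.mpr hb)).map _
    refine hx ⟨(a' - a) / (b - b'), hunit.mul_left_cancel ?_⟩
    rw [← map_mul, mul_div_cancel₀ _ (sub_ne_zero.mpr hb), map_sub, map_sub]
    linear_combination -h
  subst hb
  exact ⟨(algebraMap K L).injective (add_right_cancel h), rfl⟩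

end

theorem two_ne_zero_of_not_isSquare_neg_one {K : Type*} [Ring K] (hK : ¬ IsSquare (-1 : K)) :
    (2 : K) ≠ 0 := by
  intro h2
  exact hK ⟨1, by rw [mul_one, neg_eq_iff_add_eq_zero, one_add_one_eq_two, h2]⟩

theorem one_add_pow_four {L : Type*} [CommRing L] {i : L} (hi : i ^ 2 = -1) :
    (1 + i) ^ 4 = -4 := by
  linear_combination (i ^ 2 + 4 * i + 5) * hi

theorem algebraMap_add_algebraMap_mul_pow_four {K L : Type*} [CommRing K] [CommRing L]
    [Algebra K L] {i : L} (hi : i ^ 2 = -1) (c d : K) :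
    (algebraMap K L c + algebraMap K L d * i) ^ 4 =
      algebraMap K L (c ^ 4 - 6 * c ^ 2 * d ^ 2 + d ^ 4) +
        algebraMap K L (4 * (c ^ 3 * d - c * d ^ 3)) * i := by
  simp only [map_sub, map_add, map_mul, map_pow, map_ofNat]
  linear_combination (algebraMap K L d ^ 2 * (6 * algebraMap K L c ^ 2 +
    4 * algebraMap K L c * algebraMap K L d * i + algebraMap K L d ^ 2 * (i ^ 2 - 1))) * hi

theorem exists_eq_pow_four_or_eq_neg_four_mul_pow_four {K : Type*} [CommRing K] [IsDomain K]
    (h2 : (2 : K) ≠ 0) {c d : K} (h : 4 * (c ^ 3 * d - c * d ^ 3) = 0) :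
    ∃ v : K, c ^ 4 - 6 * c ^ 2 * d ^ 2 + d ^ 4 = v ^ 4 ∨
      c ^ 4 - 6 * c ^ 2 * d ^ 2 + d ^ 4 = -4 * v ^ 4 := by
  have hfac : c * d * ((d - c) * (d + c)) = 0 := by
    have h4 : (4 : K) ≠ 0 := by simpa [show (4 : K) = 2 * 2 by norm_num] using h2
    linear_combination -(mul_eq_zero.mp h).resolve_left h4
  rcases mul_eq_zero.mp hfac with hcd | hdc
  · rcases mul_eq_zero.mp hcd with rfl | rfl
    · exact ⟨d, Or.inl (by ring)⟩
    · exact ⟨c, Or.inl (by ring)⟩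
  · rcases mul_eq_zero.mp hdc with hd | hd
    · exact ⟨c, Or.inr (by rw [sub_eq_zero.mp hd]; ring)⟩
    · exact ⟨c, Or.inr (by rw [eq_neg_of_add_eq_zero_left hd]; ring)⟩

theorem fourth_power_in_adjoin_sqrt_neg_one_iff_general
    (K L : Type*) [Field K] [Field L] [Algebra K L]
    (hK : ¬ IsSquare (-1 : K))
    (i : L) (hi : i ^ 2 = -1) (hgen : IntermediateField.adjoin K {i} = ⊤)
    (u : K) (hu : u ≠ 0) :
    (∃ w : L, w ^ 4 = algebraMap K L u) ↔
      ∃ v : K, v ≠ 0 ∧ (u = v ^ 4 ∨ u = -4 * v ^ 4) := by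
  have hi' : i ^ 2 = algebraMap K L (-1) := by rw [hi, map_neg, map_one]
  constructor
  · rintro ⟨w, hw⟩
    have hadj : Algebra.adjoin K {i} = ⊤ := Algebra.adjoin_eq_top_of_primitive_element
      (isIntegral_of_sq_eq_algebraMap hi').isAlgebraic hgen
    obtain ⟨c, d, rfl⟩ := exists_eq_algebraMap_add_algebraMap_mul_of_mem_adjoin hi'
      (hadj ▸ Algebra.mem_top (x := w))
    rw [algebraMap_add_algebraMap_mul_pow_four hi] at hw
    obtain ⟨rfl, him⟩ := algebraMap_add_algebraMap_mul_inj (a' := u) (b' := 0)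
      (notMem_range_algebraMap_of_sq_eq_neg_one hK hi) (hw.trans (by simp))
    obtain ⟨v, hv⟩ :=
      exists_eq_pow_four_or_eq_neg_four_mul_pow_four (two_ne_zero_of_not_isSquare_neg_one hK) him
    refine ⟨v, ?_, hv⟩
    rintro rfl
    exact hu (by simpa using hv)
  · rintro ⟨v, -, rfl | rfl⟩
    · exact ⟨algebraMap K L v, by rw [map_pow]⟩
    · exact ⟨(1 + i) * algebraMap K L v, by
        rw [mul_pow, one_add_pow_four hi, map_mul, map_neg, map_ofNat, map_pow]⟩

theorem fourth_power_in_adjoin_sqrt_neg_one_iff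
    (K L : Type*) [Field K] [NumberField K] [Field L] [Algebra K L]
    (hK : ¬ IsSquare (-1 : K))
    (i : L) (hi : i ^ 2 = -1) (hgen : IntermediateField.adjoin K {i} = ⊤)
    (u : K) (hu : u ≠ 0) :
    (∃ w : L, w ^ 4 = algebraMap K L u) ↔
      ∃ v : K, v ≠ 0 ∧ (u = v ^ 4 ∨ u = -4 * v ^ 4) :=
  fourth_power_in_adjoin_sqrt_neg_one_iff_general K L hK i hi hgen u hu
end

section
/- Let K be a number field in which −3 is not a square, and let u ∈ K*. Then u is a sixth power in the quadratic extension K(√−3) if and only if there exists v ∈ K* with u = v⁶ or u = −27·v⁶. -/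
/-!
Write `w = a + b√−3` with `a, b ∈ K`. Expanding, `w⁶ = P(a, b) + Q(a, b)√−3` with
`Q = 6ab(a − b)(a + b)(a − 3b)(a + 3b)`, so `w⁶ ∈ K` forces `Q(a, b) = 0`. In each of the six
cases `P(a, b)` is `v⁶` or `−27v⁶`, because `(1 ± √−3)⁶ = 2⁶` and `(3 ± √−3)⁶ = −27 · 2⁶`.
-/

lemma six_ne_zero_of_not_isSquare_neg_three {K : Type*} [Field K] (hK : ¬IsSquare (-3 : K)) :
    (6 : K) ≠ 0 := by
  intro h6
  rcases mul_eq_zero.mp (show (2 : K) * 3 = 0 by linear_combination h6) with h2 | h3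
  · exact hK ⟨1, by linear_combination -2 * h2⟩
  · exact hK ⟨0, by linear_combination -h3⟩

lemma add_mul_pow_six_of_sq_eq_neg_three {R : Type*} [CommRing R] {s : R} (hs : s ^ 2 = -3)
    (x y : R) :
    (x + y * s) ^ 6 = (x ^ 6 - 45 * x ^ 4 * y ^ 2 + 135 * x ^ 2 * y ^ 4 - 27 * y ^ 6)
      + 6 * x * y * (x - y) * (x + y) * (x - 3 * y) * (x + 3 * y) * s := by
  linear_combination (9 * y ^ 6 - 3 * y ^ 6 * s ^ 2 + y ^ 6 * s ^ 4 - 18 * x * y ^ 5 * s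
    + 6 * x * y ^ 5 * s ^ 3 - 45 * x ^ 2 * y ^ 4 + 15 * x ^ 2 * y ^ 4 * s ^ 2
    + 20 * x ^ 3 * y ^ 3 * s + 15 * x ^ 4 * y ^ 2) * hs

section Coordinates

variable {K L : Type*} [Field K] [Field L] [Algebra K L] {s : L}

lemma exists_eq_algebraMap_add_mul_of_mem_adjoin {d : K} (hs : s ^ 2 = algebraMap K L d)
    {w : L} (hw : w ∈ Algebra.adjoin K {s}) :
    ∃ a b : K, w = algebraMap K L a + algebraMap K L b * s := by
  induction hw using Algebra.adjoin_induction with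
  | mem x hx => exact ⟨0, 1, by simp [Set.mem_singleton_iff.mp hx]⟩
  | algebraMap r => exact ⟨r, 0, by simp⟩
  | add x y _ _ hx hy =>
    obtain ⟨a, b, rfl⟩ := hx
    obtain ⟨c, e, rfl⟩ := hy
    exact ⟨a + c, b + e, by simp only [map_add]; ring⟩
  | mul x y _ _ hx hy =>
    obtain ⟨a, b, rfl⟩ := hx
    obtain ⟨c, e, rfl⟩ := hy
    exact ⟨a * c + d * (b * e), a * e + b * c, by
      simp only [map_add, map_mul]; linear_combination (algebraMap K L b * algebraMap K L e) * hs⟩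

lemma eq_and_eq_zero_of_algebraMap_add_mul_eq (hs : ∀ c : K, algebraMap K L c ≠ s)
    {a b u : K} (h : algebraMap K L a + algebraMap K L b * s = algebraMap K L u) :
    a = u ∧ b = 0 := by
  have hb : b = 0 := by
    by_contra hb
    apply hs ((u - a) / b)
    rw [map_div₀, div_eq_iff ((map_ne_zero _).mpr hb), map_sub, ← h]
    ring
  refine ⟨(algebraMap K L).injective ?_, hb⟩
  simpa [hb] using h

lemma algebraMap_ne_of_sq_eq_neg_three (hK : ¬IsSquare (-3 : K)) (hs : s ^ 2 = -3) (c : K) :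
    algebraMap K L c ≠ s := by
  intro hc
  refine hK ⟨c, (algebraMap K L).injective ?_⟩
  rw [map_mul, hc, ← sq, hs, map_neg, map_ofNat]

end Coordinates

lemma exists_pow_six_of_mul_factors_eq_zero {K : Type*} [Field K] (h6 : (6 : K) ≠ 0) {a b : K}
    (h : 6 * a * b * (a - b) * (a + b) * (a - 3 * b) * (a + 3 * b) = 0) :
    ∃ v : K, a ^ 6 - 45 * a ^ 4 * b ^ 2 + 135 * a ^ 2 * b ^ 4 - 27 * b ^ 6 = v ^ 6 ∨
      a ^ 6 - 45 * a ^ 4 * b ^ 2 + 135 * a ^ 2 * b ^ 4 - 27 * b ^ 6 = -27 * v ^ 6 := by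
  simp only [mul_eq_zero, sub_eq_zero, add_eq_zero_iff_eq_neg, h6, false_or] at h
  rcases h with (((((rfl | rfl) | rfl) | rfl) | rfl) | rfl)
  · exact ⟨b, Or.inr (by ring)⟩
  · exact ⟨a, Or.inl (by ring)⟩
  · exact ⟨2 * a, Or.inl (by ring)⟩
  · exact ⟨2 * b, Or.inl (by ring)⟩
  · exact ⟨2 * b, Or.inr (by ring)⟩
  · exact ⟨2 * b, Or.inr (by ring)⟩

theorem sixth_power_in_adjoin_sqrt_neg_three_iff_general
    (K L : Type*) [Field K] [Field L] [Algebra K L]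
    (hK : ¬ IsSquare (-3 : K))
    (s : L) (hs : s ^ 2 = -3) (hgen : IntermediateField.adjoin K {s} = ⊤)
    (u : K) (hu : u ≠ 0) :
    (∃ w : L, w ^ 6 = algebraMap K L u) ↔
      ∃ v : K, v ≠ 0 ∧ (u = v ^ 6 ∨ u = -27 * v ^ 6) := by
  have hs' : s ^ 2 = algebraMap K L (-3) := by rw [hs, map_neg, map_ofNat]
  constructor
  · rintro ⟨w, hw⟩
    have hint : IsIntegral K s := .of_pow two_pos (hs' ▸ isIntegral_algebraMap)
    have hadj := Algebra.adjoin_eq_top_of_primitive_element hint.isAlgebraic hgen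
    obtain ⟨a, b, rfl⟩ :=
      exists_eq_algebraMap_add_mul_of_mem_adjoin hs' (hadj ▸ Algebra.mem_top (x := w))
    rw [add_mul_pow_six_of_sq_eq_neg_three hs] at hw
    simp only [← map_pow, ← map_mul, ← map_ofNat (algebraMap K L), ← map_sub, ← map_add] at hw
    obtain ⟨hP, hQ⟩ :=
      eq_and_eq_zero_of_algebraMap_add_mul_eq (algebraMap_ne_of_sq_eq_neg_three hK hs) hw
    obtain ⟨v, hv⟩ :=
      exists_pow_six_of_mul_factors_eq_zero (six_ne_zero_of_not_isSquare_neg_three hK) hQ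
    refine ⟨v, ?_, hP ▸ hv⟩
    rintro rfl
    exact hu (by simpa [← hP] using hv)
  · rintro ⟨v, -, rfl | rfl⟩
    · exact ⟨algebraMap K L v, (map_pow _ _ _).symm⟩
    · refine ⟨algebraMap K L v * s, ?_⟩
      have hs6 : s ^ 6 = -27 := by rw [show s ^ 6 = (s ^ 2) ^ 3 by ring, hs]; norm_num
      rw [mul_pow, hs6, ← map_pow, map_mul, map_neg, map_ofNat, mul_comm]

theorem sixth_power_in_adjoin_sqrt_neg_three_iff
    (K L : Type*) [Field K] [NumberField K] [Field L] [Algebra K L]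
    (hK : ¬ IsSquare (-3 : K))
    (s : L) (hs : s ^ 2 = -3) (hgen : IntermediateField.adjoin K {s} = ⊤)
    (u : K) (hu : u ≠ 0) :
    (∃ w : L, w ^ 6 = algebraMap K L u) ↔
      ∃ v : K, v ≠ 0 ∧ (u = v ^ 6 ∨ u = -27 * v ^ 6) :=
  sixth_power_in_adjoin_sqrt_neg_three_iff_general K L hK s hs hgen u hu
end

section
/- Let p be a prime. Let B be the subgroup of GL₂(𝔽_p) consisting of invertible upper-triangular matrices, let U be the cyclic subgroup of B generated by the matrix [[1,1],[0,1]], and let D be a subgroup of the group of invertible diagonal matrices. Let H = D·U = { d·u : d ∈ D, u ∈ U }, which is a subgroup of B. Suppose φ is an automorphism of H such that for every x ∈ H the matrix φ(x) has the same diagonal entries as x. Then there exists A ∈ B such that φ(x) = A·x·A⁻¹ for all x ∈ H. -/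
open Matrix Pointwise

/-- The Borel subgroup of invertible upper-triangular matrices in `GL₂(𝔽_p)`. -/
def borelGL (p : ℕ) : Subgroup (GL (Fin 2) (ZMod p)) where
  carrier := {g | (g : Matrix (Fin 2) (Fin 2) (ZMod p)) 1 0 = 0}
  one_mem' := by simp [Matrix.one_apply]
  mul_mem' := fun {g h} hg hh => by
    have : ((g * h : GL (Fin 2) (ZMod p)) : Matrix (Fin 2) (Fin 2) (ZMod p)) 1 0 = 0 := by
      rw [Units.val_mul, Matrix.mul_apply, Fin.sum_univ_two]
      rw [Set.mem_setOf_eq] at hg hh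
      rw [hg, hh, zero_mul, mul_zero, add_zero]
    exact this
  inv_mem' := fun {g} hg => by
    have : ((g⁻¹ : GL (Fin 2) (ZMod p)) : Matrix (Fin 2) (Fin 2) (ZMod p)) 1 0 = 0 := by
      rw [Set.mem_setOf_eq] at hg
      rw [Matrix.coe_units_inv, Matrix.inv_def, Matrix.adjugate_fin_two, Matrix.smul_apply]
      simp [hg]
    exact this

/-- The invertible matrix `[[1,1],[0,1]]`. -/
def unipotent (p : ℕ) : GL (Fin 2) (ZMod p) :=
  ⟨!![1, 1; 0, 1], !![1, -1; 0, 1],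
    by rw [Matrix.mul_fin_two, Matrix.one_fin_two]; norm_num,
    by rw [Matrix.mul_fin_two, Matrix.one_fin_two]; norm_num⟩

/-!
Elements of `H` are upper triangular, so `φ` can only move the upper-right entry. On
`U ≅ 𝔽_p` it acts as multiplication by some `c ≠ 0`. On `D` the new upper-right entry of `d`
is `t · (d₁₁ - d₀₀)` for a single `t`: two commuting elements of `D` force these entries to be
proportional to `d₁₁ - d₀₀`, and a scalar `d` is fixed: `φ d = d · u` with `u` unipotent and
commuting with `d`, and `u` has order `1` or `p` while `d` has order dividing `p - 1`. Conjugation by `[[c, t], [0, 1]]` moves the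
upper-right entry in exactly the same way.
-/

open Matrix.GeneralLinearGroup

lemma Commute.fin_two_apply_zero_one_mul_sub {R : Type*} [CommRing R]
    {X Y : Matrix (Fin 2) (Fin 2) R} (h : Commute X Y) :
    X 0 1 * (Y 1 1 - Y 0 0) = Y 0 1 * (X 1 1 - X 0 0) := by
  have h01 := congrFun (congrFun h.eq 0) 1
  simp only [Matrix.mul_apply, Fin.sum_univ_two] at h01
  linear_combination h01

lemma Matrix.fin_two_mul_eq_mul_of_apply_zero_one_eq {R : Type*} [CommRing R]
    {X Y : Matrix (Fin 2) (Fin 2) R} (c t : R) (hX : X 1 0 = 0) (hY : Y 1 0 = 0)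
    (h00 : Y 0 0 = X 0 0) (h11 : Y 1 1 = X 1 1)
    (h01 : Y 0 1 = c * X 0 1 + t * (X 1 1 - X 0 0)) :
    Y * !![c, t; 0, 1] = !![c, t; 0, 1] * X := by
  ext i j
  fin_cases i <;> fin_cases j <;> simp [Matrix.mul_apply, hX, hY, h00, h11, h01] <;> ring

lemma exists_eq_mul_of_mul_eq_mul {ι K : Type*} [Field K] {q δ : ι → K}
    (h : ∀ i j, q i * δ j = q j * δ i) (h0 : ∀ i, δ i = 0 → q i = 0) :
    ∃ t, ∀ i, q i = t * δ i := by
  by_cases hδ : ∃ j, δ j ≠ 0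
  · obtain ⟨j, hj⟩ := hδ
    refine ⟨q j / δ j, fun i => ?_⟩
    rw [div_mul_eq_mul_div, eq_div_iff hj, h]
  · push Not at hδ
    exact ⟨0, fun i => by rw [h0 i (hδ i), zero_mul]⟩

lemma upperRightHom_intCast {R : Type*} [Ring R] (k : ℤ) :
    upperRightHom (k : R) = upperRightHom 1 ^ k := by
  rw [← AddChar.map_zsmul_eq_zpow, zsmul_one]

lemma coe_upperRightHom_mul {R : Type*} [CommRing R] (g : GL (Fin 2) R) (b : R) :
    ((g * upperRightHom b : GL (Fin 2) R) : Matrix (Fin 2) (Fin 2) R) =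
      !![g 0 0, g 0 0 * b + g 0 1; g 1 0, g 1 0 * b + g 1 1] := by
  rw [Units.val_mul, upperRightHom_apply, Matrix.eta_fin_two (g : Matrix (Fin 2) (Fin 2) R),
    Matrix.mul_fin_two]
  simp

lemma unipotent_eq_upperRightHom (p : ℕ) : unipotent p = upperRightHom 1 := rfl

lemma coe_zpowers_upperRightHom_one (n : ℕ) :
    (Subgroup.zpowers (upperRightHom (1 : ZMod n)) : Set (GL (Fin 2) (ZMod n))) =
      Set.range upperRightHom := by
  ext g
  simp only [SetLike.mem_coe, Subgroup.mem_zpowers_iff, Set.mem_range, ← upperRightHom_intCast]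
  constructor
  · rintro ⟨k, rfl⟩
    exact ⟨k, rfl⟩
  · rintro ⟨b, rfl⟩
    exact ⟨b.cast, by rw [ZMod.intCast_zmod_cast]⟩

section diagGL

variable {p : ℕ} {d e : GL (Fin 2) (ZMod p)}

lemma coe_eq_diagonal_of_mem_diagGL (hd : d ∈ diagGL p) :
    (d : Matrix (Fin 2) (Fin 2) (ZMod p)) = Matrix.diagonal ![d 0 0, d 1 1] := by
  obtain ⟨v, hv⟩ := hd
  ext i j
  fin_cases i <;> fin_cases j <;> simp [hv]

lemma apply_zero_one_of_mem_diagGL (hd : d ∈ diagGL p) : d 0 1 = 0 := by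
  rw [coe_eq_diagonal_of_mem_diagGL hd]; simp

lemma apply_one_zero_of_mem_diagGL (hd : d ∈ diagGL p) : d 1 0 = 0 := by
  rw [coe_eq_diagonal_of_mem_diagGL hd]; simp

lemma eq_of_mem_diagGL (hd : d ∈ diagGL p) (he : e ∈ diagGL p) (h00 : d 0 0 = e 0 0)
    (h11 : d 1 1 = e 1 1) : d = e := by
  ext : 1
  rw [coe_eq_diagonal_of_mem_diagGL hd, coe_eq_diagonal_of_mem_diagGL he, h00, h11]

lemma commute_of_mem_diagGL (hd : d ∈ diagGL p) (he : e ∈ diagGL p) : Commute d e := by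
  rw [← Commute.units_val_iff, coe_eq_diagonal_of_mem_diagGL hd,
    coe_eq_diagonal_of_mem_diagGL he]
  exact Matrix.commute_diagonal _ _

lemma commute_of_mem_diagGL_of_apply_eq (hd : d ∈ diagGL p) (h : d 0 0 = d 1 1)
    (g : GL (Fin 2) (ZMod p)) : Commute d g := by
  have hscalar : (d : Matrix (Fin 2) (Fin 2) (ZMod p)) = Matrix.scalar (Fin 2) (d 0 0) := by
    rw [coe_eq_diagonal_of_mem_diagGL hd, ← h]
    ext i j
    fin_cases i <;> fin_cases j <;> simp [h]
  rw [← Commute.units_val_iff, hscalar]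
  exact Matrix.scalar_commute _ (Commute.all _) _

lemma pow_card_sub_one_of_mem_diagGL [Fact p.Prime] (hd : d ∈ diagGL p) : d ^ (p - 1) = 1 := by
  have hdet : d 0 0 * d 1 1 ≠ 0 := by
    have := (Matrix.isUnit_iff_isUnit_det _).mp d.isUnit
    rwa [coe_eq_diagonal_of_mem_diagGL hd, Matrix.det_diagonal, Fin.prod_univ_two,
      isUnit_iff_ne_zero] at this
  ext : 1
  rw [Units.val_pow_eq_pow_val, coe_eq_diagonal_of_mem_diagGL hd, Matrix.diagonal_pow,
    Units.val_one, ← Matrix.diagonal_one]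
  congr 1
  ext i
  fin_cases i
  · exact ZMod.pow_card_sub_one_eq_one (left_ne_zero_of_mul hdet)
  · exact ZMod.pow_card_sub_one_eq_one (right_ne_zero_of_mul hdet)

end diagGL

section DiagMulUnipotent

variable {p : ℕ} {D H : Subgroup (GL (Fin 2) (ZMod p))}

lemma mem_iff_exists_eq_mul_upperRightHom
    (hH : (H : Set (GL (Fin 2) (ZMod p))) =
      (D : Set (GL (Fin 2) (ZMod p))) * (Subgroup.zpowers (unipotent p) : Set (GL (Fin 2) (ZMod p))))
    (x : GL (Fin 2) (ZMod p)) : x ∈ H ↔ ∃ d ∈ D, ∃ b, x = d * upperRightHom b := by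
  rw [← SetLike.mem_coe, hH, unipotent_eq_upperRightHom, coe_zpowers_upperRightHom_one]
  simp [Set.mem_mul, eq_comm]

variable (hD : D ≤ diagGL p) (hH : ∀ x, x ∈ H ↔ ∃ d ∈ D, ∃ b, x = d * upperRightHom b)
include hD hH

lemma apply_one_zero_of_mem {x : GL (Fin 2) (ZMod p)} (hx : x ∈ H) : x 1 0 = 0 := by
  obtain ⟨d, hd, b, rfl⟩ := (hH _).1 hx
  rw [coe_upperRightHom_mul]
  simp [apply_one_zero_of_mem_diagGL (hD hd)]

lemma exists_eq_mul_upperRightHom_of_apply_eq {x d : GL (Fin 2) (ZMod p)} (hx : x ∈ H)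
    (hd : d ∈ D) (h00 : x 0 0 = d 0 0) (h11 : x 1 1 = d 1 1) :
    ∃ b, x = d * upperRightHom b := by
  obtain ⟨d', hd', b, rfl⟩ := (hH _).1 hx
  rw [coe_upperRightHom_mul] at h00 h11
  simp only [Matrix.of_apply, Matrix.cons_val', Matrix.cons_val_zero, Matrix.cons_val_one,
    Matrix.cons_val_fin_one, apply_one_zero_of_mem_diagGL (hD hd'), zero_mul, zero_add] at h00 h11
  exact ⟨b, by rw [eq_of_mem_diagGL (hD hd') (hD hd) h00 h11]⟩

variable {f : H →* H}
  (hf : ∀ x : H, (f x : GL (Fin 2) (ZMod p)) 0 0 = (x : GL (Fin 2) (ZMod p)) 0 0 ∧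
    (f x : GL (Fin 2) (ZMod p)) 1 1 = (x : GL (Fin 2) (ZMod p)) 1 1)
include hf

lemma exists_ne_zero_map_eq_upperRightHom_mul [Fact (1 < p)]
    (hinj : Function.Injective f) :
    ∃ c ≠ 0, ∀ (x : H) (b : ZMod p), (x : GL (Fin 2) (ZMod p)) = upperRightHom b →
      (f x : GL (Fin 2) (ZMod p)) = upperRightHom (c * b) := by
  set u : H := ⟨upperRightHom 1, (hH _).2 ⟨1, D.one_mem, 1, (one_mul _).symm⟩⟩
  obtain ⟨c, hc⟩ := exists_eq_mul_upperRightHom_of_apply_eq hD hH (f u).2 D.one_mem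
    (by simpa [u] using (hf u).1) (by simpa [u] using (hf u).2)
  rw [one_mul] at hc
  refine ⟨c, fun hc0 => ?_, fun x b hx => ?_⟩
  · have hu : u = 1 := hinj (Subtype.ext (by rw [hc, hc0, AddChar.map_zero_eq_one, map_one]; rfl))
    refine one_ne_zero (injective_upperRightHom (R := ZMod p) ?_)
    rw [AddChar.map_zero_eq_one]
    exact congrArg Subtype.val hu
  · have hxu : x = u ^ (b.cast : ℤ) := by
      ext : 1
      rw [hx, Subgroup.coe_zpow, ← upperRightHom_intCast, ZMod.intCast_zmod_cast]
    rw [hxu, map_zpow, Subgroup.coe_zpow, hc, ← AddChar.map_zsmul_eq_zpow, zsmul_eq_mul,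
      ZMod.intCast_zmod_cast, mul_comm]

lemma map_eq_self_of_apply_eq [Fact p.Prime]
    {x : H} (hx : (x : GL (Fin 2) (ZMod p)) ∈ D)
    (hscalar : (x : GL (Fin 2) (ZMod p)) 0 0 = (x : GL (Fin 2) (ZMod p)) 1 1) : f x = x := by
  obtain ⟨s, hs⟩ := exists_eq_mul_upperRightHom_of_apply_eq hD hH (f x).2 hx (hf x).1 (hf x).2
  have hpow : x ^ (p - 1) = 1 := Subtype.ext (pow_card_sub_one_of_mem_diagGL (hD hx))
  have hs0 : upperRightHom ((p - 1 : ℕ) • s) = 1 := by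
    calc upperRightHom ((p - 1 : ℕ) • s)
        = (x : GL (Fin 2) (ZMod p)) ^ (p - 1) * upperRightHom s ^ (p - 1) := by
          rw [← Subgroup.coe_pow, hpow, AddChar.map_nsmul_eq_pow, Subgroup.coe_one, one_mul]
      _ = ((f x) ^ (p - 1) : H) := by
          rw [Subgroup.coe_pow, hs,
            (commute_of_mem_diagGL_of_apply_eq (hD hx) hscalar _).mul_pow]
      _ = 1 := by rw [← map_pow, hpow, map_one, Subgroup.coe_one]
  have : s = 0 := by
    rw [← AddChar.map_zero_eq_one upperRightHom] at hs0
    have := injective_upperRightHom hs0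
    rwa [nsmul_eq_mul, Nat.cast_sub (Fact.out : p.Prime).one_le, ZMod.natCast_self,
      Nat.cast_one, zero_sub, neg_one_mul, neg_eq_zero] at this
  exact Subtype.ext (by rw [hs, this, AddChar.map_zero_eq_one, mul_one])

lemma exists_map_apply_zero_one_eq_mul_sub [Fact p.Prime] :
    ∃ t, ∀ x : H, (x : GL (Fin 2) (ZMod p)) ∈ D →
      (f x : GL (Fin 2) (ZMod p)) 0 1 =
        t * ((x : GL (Fin 2) (ZMod p)) 1 1 - (x : GL (Fin 2) (ZMod p)) 0 0) := by
  obtain ⟨t, ht⟩ := exists_eq_mul_of_mul_eq_mul (ι := {x : H // (x : GL (Fin 2) (ZMod p)) ∈ D})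
    (q := fun x => (f x : GL (Fin 2) (ZMod p)) 0 1)
    (δ := fun x => (x : GL (Fin 2) (ZMod p)) 1 1 - (x : GL (Fin 2) (ZMod p)) 0 0)
    (fun x y => by
      have hxy : Commute x.1 y.1 :=
        Subtype.ext (commute_of_mem_diagGL (hD x.2) (hD y.2)).eq
      have hfxy : Commute (f x.1 : GL (Fin 2) (ZMod p)) (f y.1) :=
        congrArg Subtype.val (hxy.map f).eq
      have := (Commute.units_val_iff.2 hfxy).fin_two_apply_zero_one_mul_sub
      rwa [(hf x).1, (hf x).2, (hf y).1, (hf y).2] at this)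
    (fun x hx => by
      rw [map_eq_self_of_apply_eq hD hH hf x.2 (sub_eq_zero.1 hx).symm]
      exact apply_zero_one_of_mem_diagGL (hD x.2))
  exact ⟨t, fun x hx => ht ⟨x, hx⟩⟩

lemma exists_map_apply_zero_one_eq [Fact p.Prime]
    (hinj : Function.Injective f) :
    ∃ c ≠ 0, ∃ t, ∀ x : H, (f x : GL (Fin 2) (ZMod p)) 0 1 = c * (x : GL (Fin 2) (ZMod p)) 0 1 +
      t * ((x : GL (Fin 2) (ZMod p)) 1 1 - (x : GL (Fin 2) (ZMod p)) 0 0) := by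
  obtain ⟨c, hc, hfu⟩ := exists_ne_zero_map_eq_upperRightHom_mul hD hH hf hinj
  obtain ⟨t, hfd⟩ := exists_map_apply_zero_one_eq_mul_sub hD hH hf
  refine ⟨c, hc, t, fun x => ?_⟩
  obtain ⟨d, hd, b, hx⟩ := (hH x).1 x.2
  set y : H := ⟨d, (hH d).2 ⟨d, hd, 0, by rw [AddChar.map_zero_eq_one, mul_one]⟩⟩
  set u : H := ⟨upperRightHom b, (hH _).2 ⟨1, D.one_mem, b, (one_mul _).symm⟩⟩
  have hfx : (f x : GL (Fin 2) (ZMod p)) = f y * upperRightHom (c * b) := by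
    rw [show x = y * u from Subtype.ext hx, map_mul, Subgroup.coe_mul, hfu u b rfl]
  rw [hfx, coe_upperRightHom_mul, hx, coe_upperRightHom_mul]
  simp only [y, (hf y).1, hfd y hd, apply_zero_one_of_mem_diagGL (hD hd),
    apply_one_zero_of_mem_diagGL (hD hd), Matrix.of_apply, Matrix.cons_val', Matrix.cons_val_zero,
    Matrix.cons_val_one, Matrix.cons_val_fin_one, zero_mul, zero_add, add_zero]
  ring

end DiagMulUnipotent

theorem automorphism_of_DU_is_inner (p : ℕ) [Fact p.Prime]
    (D : Subgroup (GL (Fin 2) (ZMod p))) (hD : D ≤ diagGL p)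
    (H : Subgroup (GL (Fin 2) (ZMod p)))
    (hH : (H : Set (GL (Fin 2) (ZMod p))) =
      (D : Set (GL (Fin 2) (ZMod p))) * (Subgroup.zpowers (unipotent p) : Set (GL (Fin 2) (ZMod p))))
    (φ : H ≃* H)
    (hφ : ∀ x : H,
      ((φ x : GL (Fin 2) (ZMod p)) : Matrix (Fin 2) (Fin 2) (ZMod p)) 0 0 =
        ((x : GL (Fin 2) (ZMod p)) : Matrix (Fin 2) (Fin 2) (ZMod p)) 0 0 ∧
      ((φ x : GL (Fin 2) (ZMod p)) : Matrix (Fin 2) (Fin 2) (ZMod p)) 1 1 =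
        ((x : GL (Fin 2) (ZMod p)) : Matrix (Fin 2) (Fin 2) (ZMod p)) 1 1) :
    ∃ A ∈ borelGL p, ∀ x : H,
      (φ x : GL (Fin 2) (ZMod p)) = A * (x : GL (Fin 2) (ZMod p)) * A⁻¹ := by
  have hmem := mem_iff_exists_eq_mul_upperRightHom hH
  obtain ⟨c, hc, t, ht⟩ :=
    exists_map_apply_zero_one_eq hD hmem (f := φ.toMonoidHom) hφ φ.injective
  let A : GL (Fin 2) (ZMod p) := Matrix.nonsingInvUnit !![c, t; 0, 1] (by simpa using hc)
  have hA : (A : Matrix (Fin 2) (Fin 2) (ZMod p)) = !![c, t; 0, 1] := rfl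
  refine ⟨A, by simp [borelGL, hA], fun x => ?_⟩
  rw [eq_mul_inv_iff_mul_eq]
  ext : 1
  rw [Units.val_mul, Units.val_mul, hA]
  exact Matrix.fin_two_mul_eq_mul_of_apply_zero_one_eq c t (apply_one_zero_of_mem hD hmem x.2)
    (apply_one_zero_of_mem hD hmem (φ x).2) (hφ x).1 (hφ x).2 (ht x)
end

section
/- Let p be a prime and G a group. Let ρ₁, ρ₂ : G → GL₂(𝔽_p) be group homomorphisms such that: (i) ker ρ₁ = ker ρ₂; (ii) the images of ρ₁ and ρ₂ are contained in the group of invertible upper-triangular matrices; (iii) for every σ ∈ G, the matrices ρ₁(σ) and ρ₂(σ) have the same diagonal entries (the (1,1)-entries agree and the (2,2)-entries agree); and (iv) the matrix [[1,1],[0,1]] belongs to the image of ρ₁ and to the image of ρ₂. Then there exists an invertible upper-triangular matrix A ∈ GL₂(𝔽_p) such that ρ₂(σ) = A·ρ₁(σ)·A⁻¹ for all σ ∈ G. -/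
open Matrix

/-!
Write `ρᵢ σ = !![a σ, bᵢ σ; 0, d σ]`. Multiplicativity of `ρᵢ` makes `a`, `d` characters and
`b₁`, `b₂` cocycles for them, and so is `f = b₂ - c • b₁`, where `c = b₂ τ` for the element `τ`
with `ρ₁ τ = !![1, 1; 0, 1]`. If `a σ = d σ`, multiplying `σ` by a power of `τ` makes `ρ₁ σ`
scalar without changing `f σ`; a scalar matrix has order dividing `p - 1`, so by the kernel
hypothesis `ρ₂ σ = (ρ₂ σ) ^ p`, which in characteristic `p` is scalar, and hence `f σ = 0`.
A cocycle vanishing wherever `a = d` satisfies `f (σ * τ) = f (τ * σ)`, which forces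
`f = β • (d - a)`; then `!![c, β; 0, 1]` conjugates `ρ₁` into `ρ₂`.
-/

section

variable {G K : Type*}

/-- `b ∈ upperCocycles a d` exactly when `σ ↦ !![a σ, b σ; 0, d σ]` is multiplicative. -/
def upperCocycles [Monoid G] [CommRing K] (a d : G →* K) : Submodule K (G → K) where
  carrier := {b | ∀ σ τ, b (σ * τ) = a σ * b τ + b σ * d τ}
  zero_mem' _ _ := by simp
  add_mem' hb hb' σ τ := by simp only [Pi.add_apply, hb σ τ, hb' σ τ]; ring
  smul_mem' c b hb σ τ := by simp only [Pi.smul_apply, smul_eq_mul, hb σ τ]; ring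

namespace upperCocycles

section Monoid

variable [Monoid G] [CommRing K] {a d : G →* K} {b : G → K}

theorem apply_mul (hb : b ∈ upperCocycles a d) (σ τ : G) :
    b (σ * τ) = a σ * b τ + b σ * d τ :=
  hb σ τ

theorem apply_one (hb : b ∈ upperCocycles a d) : b 1 = 0 := by
  have h := apply_mul hb 1 1
  simp only [mul_one, map_one, one_mul] at h
  linear_combination -h

theorem apply_pow_of_eq_one (hb : b ∈ upperCocycles a d) {g : G} (ha : a g = 1) (hd : d g = 1)
    (n : ℕ) : b (g ^ n) = n * b g := by
  induction n with
  | zero => simp [apply_one hb]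
  | succ n ih => rw [pow_succ, apply_mul hb, ih, map_pow, ha, hd]; push_cast; ring

end Monoid

section Group

variable [Group G] [Field K] {a d : G →* K} {f : G → K}

theorem apply_mul_comm (hf : f ∈ upperCocycles a d) (hf₀ : ∀ σ, a σ = d σ → f σ = 0)
    (σ τ : G) : f (σ * τ) = f (τ * σ) := by
  set h := (τ * σ)⁻¹ * (σ * τ)
  have hchar : ∀ χ : G →* K, χ h = 1 := fun χ => by
    rw [map_mul, map_mul χ σ, mul_comm (χ σ), ← map_mul, ← map_mul, inv_mul_cancel, map_one]
  calc f (σ * τ) = f (τ * σ * h) := congrArg f (mul_inv_cancel_left _ _).symm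
    _ = f (τ * σ) := by
      rw [apply_mul hf, hf₀ h ((hchar a).trans (hchar d).symm), hchar d]; ring

theorem exists_eq_mul_sub (hf : f ∈ upperCocycles a d) (hf₀ : ∀ σ, a σ = d σ → f σ = 0) :
    ∃ β, ∀ σ, f σ = β * (d σ - a σ) := by
  by_cases hscalar : ∀ σ, a σ = d σ
  · exact ⟨0, fun σ => by rw [hf₀ σ (hscalar σ), zero_mul]⟩
  push Not at hscalar
  obtain ⟨σ₀, hσ₀⟩ := hscalar
  refine ⟨f σ₀ / (d σ₀ - a σ₀), fun σ => ?_⟩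
  have hcomm := apply_mul_comm hf hf₀ σ σ₀
  rw [apply_mul hf, apply_mul hf] at hcomm
  field_simp [sub_ne_zero.2 (Ne.symm hσ₀)]
  linear_combination hcomm

theorem sub_smul_apply_eq_zero {p : ℕ} [Fact p.Prime] {a d : G →* ZMod p}
    {b₁ b₂ : G → ZMod p} (hb₁ : b₁ ∈ upperCocycles a d) (hb₂ : b₂ ∈ upperCocycles a d)
    (hscalar : ∀ g, a g = d g → b₁ g = 0 → b₂ g = 0)
    {τ : G} (haτ : a τ = 1) (hdτ : d τ = 1) (hbτ : b₁ τ = 1)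
    {σ : G} (hσ : a σ = d σ) : (b₂ - b₂ τ • b₁) σ = 0 := by
  set f := b₂ - b₂ τ • b₁
  have hf : f ∈ upperCocycles a d := sub_mem hb₂ (Submodule.smul_mem _ _ hb₁)
  have hfτ : f τ = 0 := by simp [f, hbτ]
  have haσ : a σ ≠ 0 := ((Group.isUnit σ).map a).ne_zero
  set k := (-b₁ σ / a σ).val
  have hk : (k : ZMod p) = -b₁ σ / a σ := ZMod.natCast_zmod_val _
  set g := σ * τ ^ k
  have hb₁g : b₁ g = 0 := by
    rw [apply_mul hb₁, apply_pow_of_eq_one hb₁ haτ hdτ, hbτ, hk, map_pow, hdτ]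
    field_simp
    ring
  have hg : a g = d g := by simp [g, hσ, haτ, hdτ]
  calc f σ = f g := by rw [apply_mul hf, apply_pow_of_eq_one hf haτ hdτ, hfτ, map_pow, hdτ]; ring
    _ = 0 := by simp [f, hb₁g, hscalar g hg hb₁g]

end Group

end upperCocycles

def upperDiagHom [Monoid G] [CommRing K] (ρ : G →* GL (Fin 2) K)
    (hρ : ∀ σ, (ρ σ : Matrix (Fin 2) (Fin 2) K) 1 0 = 0) (i : Fin 2) : G →* K where
  toFun σ := (ρ σ : Matrix (Fin 2) (Fin 2) K) i i
  map_one' := by simp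
  map_mul' σ τ := by fin_cases i <;> simp [Matrix.mul_apply, Fin.sum_univ_two, hρ]

theorem apply_zero_one_mem_upperCocycles [Monoid G] [CommRing K] {ρ : G →* GL (Fin 2) K}
    {a d : G →* K} (ha : ∀ σ, (ρ σ : Matrix (Fin 2) (Fin 2) K) 0 0 = a σ)
    (hd : ∀ σ, (ρ σ : Matrix (Fin 2) (Fin 2) K) 1 1 = d σ) :
    (fun σ => (ρ σ : Matrix (Fin 2) (Fin 2) K) 0 1) ∈ upperCocycles a d := fun σ τ => by
  simp [Matrix.mul_apply, Fin.sum_univ_two, ha, hd]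

theorem upper_mul_eq_mul_upper {R : Type*} [CommRing R] {a d b₁ b₂ c β : R}
    (h : b₂ - c * b₁ = β * (d - a)) :
    !![a, b₂; 0, d] * !![c, β; 0, 1] = !![c, β; 0, 1] * !![a, b₁; 0, d] := by
  have h' : a * β + b₂ = c * b₁ + β * d := by linear_combination h
  simpa [mul_fin_two, mul_comm c a] using h'

theorem exists_upper_conj_of_sub_mul_eq [Monoid G] [Field K] {ρ₁ ρ₂ : G →* GL (Fin 2) K}
    {a d b₁ b₂ : G → K} (hρ₁ : ∀ σ, (ρ₁ σ : Matrix (Fin 2) (Fin 2) K) = !![a σ, b₁ σ; 0, d σ])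
    (hρ₂ : ∀ σ, (ρ₂ σ : Matrix (Fin 2) (Fin 2) K) = !![a σ, b₂ σ; 0, d σ]) {c β : K} (hc : c ≠ 0)
    (hβ : ∀ σ, b₂ σ - c * b₁ σ = β * (d σ - a σ)) :
    ∃ A : GL (Fin 2) K, (A : Matrix (Fin 2) (Fin 2) K) 1 0 = 0 ∧
      ∀ σ, ρ₂ σ = A * ρ₁ σ * A⁻¹ := by
  refine ⟨GeneralLinearGroup.mkOfDetNeZero !![c, β; 0, 1] (by simp [det_fin_two_of, hc]),
    rfl, fun σ => ?_⟩
  rw [eq_mul_inv_iff_mul_eq]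
  ext1
  simpa only [Units.val_mul, GeneralLinearGroup.val_mkOfDetNeZero, hρ₁, hρ₂] using
    upper_mul_eq_mul_upper (hβ σ)

theorem upper_right_eq_zero_of_pow_char_eq_self {R : Type*} [CommRing R] (p : ℕ)
    [hp : Fact p.Prime] [CharP R p] {t x : R} (h : !![t, x; 0, t] ^ p = !![t, x; 0, t]) :
    x = 0 := by
  have hsplit : !![t, x; 0, t] = scalar (Fin 2) t + !![0, x; 0, 0] := by
    ext i j; fin_cases i <;> fin_cases j <;> simp
  have hnil : !![0, x; 0, 0] ^ 2 = 0 := by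
    ext i j; fin_cases i <;> fin_cases j <;> simp [sq]
  rw [hsplit, add_pow_char_of_commute p (scalar_commute t (Commute.all t) _),
    pow_eq_zero_of_le hp.out.two_le hnil, ← map_pow] at h
  simpa [eq_comm] using congrFun (congrFun h 0) 1

theorem upper_right_eq_zero_of_ker_eq {p : ℕ} [hp : Fact p.Prime] [Group G]
    {ρ₁ ρ₂ : G →* GL (Fin 2) (ZMod p)} (hker : ρ₁.ker = ρ₂.ker) {g : G} {t s x : ZMod p}
    (h₁ : (ρ₁ g : Matrix (Fin 2) (Fin 2) (ZMod p)) = !![t, 0; 0, t])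
    (h₂ : (ρ₂ g : Matrix (Fin 2) (Fin 2) (ZMod p)) = !![s, x; 0, s]) : x = 0 := by
  have ht : t ≠ 0 := by
    have := (Matrix.isUnit_iff_isUnit_det _).1 (ρ₁ g).isUnit
    simpa [h₁, det_fin_two_of] using this
  have hscalar : !![t, 0; 0, t] = scalar (Fin 2) t := by
    ext i j; fin_cases i <;> fin_cases j <;> simp
  have hker₁ : g ^ (p - 1) ∈ ρ₁.ker := by
    rw [MonoidHom.mem_ker, map_pow]
    ext1
    rw [Units.val_pow_eq_pow_val, h₁, hscalar, ← map_pow, ZMod.pow_card_sub_one_eq_one ht,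
      map_one, Units.val_one]
  rw [hker, MonoidHom.mem_ker, map_pow] at hker₁
  have hpow : ρ₂ g ^ (p - 1 + 1) = ρ₂ g := by rw [pow_succ, hker₁, one_mul]
  rw [Nat.sub_add_cancel hp.out.one_le] at hpow
  apply upper_right_eq_zero_of_pow_char_eq_self p (t := s)
  rw [← h₂, ← Units.val_pow_eq_pow_val, hpow]

end

theorem conjugate_of_same_diagonal_general (p : ℕ) (hp : p.Prime)
    {G : Type*} [Group G] (ρ₁ ρ₂ : G →* GL (Fin 2) (ZMod p))
    (hker : ρ₁.ker = ρ₂.ker)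
    (hupper₁ : ∀ σ : G, ((ρ₁ σ : GL (Fin 2) (ZMod p)) : Matrix (Fin 2) (Fin 2) (ZMod p)) 1 0 = 0)
    (hupper₂ : ∀ σ : G, ((ρ₂ σ : GL (Fin 2) (ZMod p)) : Matrix (Fin 2) (Fin 2) (ZMod p)) 1 0 = 0)
    (hdiag : ∀ σ : G,
      ((ρ₁ σ : GL (Fin 2) (ZMod p)) : Matrix (Fin 2) (Fin 2) (ZMod p)) 0 0 =
        ((ρ₂ σ : GL (Fin 2) (ZMod p)) : Matrix (Fin 2) (Fin 2) (ZMod p)) 0 0 ∧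
      ((ρ₁ σ : GL (Fin 2) (ZMod p)) : Matrix (Fin 2) (Fin 2) (ZMod p)) 1 1 =
        ((ρ₂ σ : GL (Fin 2) (ZMod p)) : Matrix (Fin 2) (Fin 2) (ZMod p)) 1 1)
    (hunip₁ : ∃ σ : G,
      ((ρ₁ σ : GL (Fin 2) (ZMod p)) : Matrix (Fin 2) (Fin 2) (ZMod p)) = !![1, 1; 0, 1]) :
    ∃ A : GL (Fin 2) (ZMod p),
      ((A : GL (Fin 2) (ZMod p)) : Matrix (Fin 2) (Fin 2) (ZMod p)) 1 0 = 0 ∧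
      ∀ σ : G, ρ₂ σ = A * ρ₁ σ * A⁻¹ := by
  have := Fact.mk hp
  set a := upperDiagHom ρ₁ hupper₁ 0
  set d := upperDiagHom ρ₁ hupper₁ 1
  set b₁ : G → ZMod p := fun σ => (ρ₁ σ : Matrix (Fin 2) (Fin 2) (ZMod p)) 0 1
  set b₂ : G → ZMod p := fun σ => (ρ₂ σ : Matrix (Fin 2) (Fin 2) (ZMod p)) 0 1
  have hρ₁ : ∀ σ, (ρ₁ σ : Matrix (Fin 2) (Fin 2) (ZMod p)) = !![a σ, b₁ σ; 0, d σ] :=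
    fun σ => (eta_fin_two _).trans (by rw [hupper₁]; rfl)
  have hρ₂ : ∀ σ, (ρ₂ σ : Matrix (Fin 2) (Fin 2) (ZMod p)) = !![a σ, b₂ σ; 0, d σ] :=
    fun σ => (eta_fin_two _).trans (by rw [hupper₂, ← (hdiag σ).1, ← (hdiag σ).2]; rfl)
  have hb₁ : b₁ ∈ upperCocycles a d :=
    apply_zero_one_mem_upperCocycles (fun _ => rfl) (fun _ => rfl)
  have hb₂ : b₂ ∈ upperCocycles a d :=
    apply_zero_one_mem_upperCocycles (fun σ => (hdiag σ).1.symm) (fun σ => (hdiag σ).2.symm)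
  obtain ⟨τ, hτ⟩ := hunip₁
  obtain ⟨⟨haτ, hbτ⟩, hdτ⟩ : (a τ = 1 ∧ b₁ τ = 1) ∧ d τ = 1 := by
    simpa using (hρ₁ τ).symm.trans hτ
  have hscalar : ∀ g, a g = d g → b₁ g = 0 → b₂ g = 0 := fun g hg hb₁g =>
    upper_right_eq_zero_of_ker_eq hker (by rw [hρ₁, hb₁g, ← hg]) (by rw [hρ₂, ← hg])
  obtain ⟨β, hβ⟩ := upperCocycles.exists_eq_mul_sub (sub_mem hb₂ (Submodule.smul_mem _ _ hb₁))
    fun σ hσ => upperCocycles.sub_smul_apply_eq_zero hb₁ hb₂ hscalar haτ hdτ hbτ hσ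
  have hτ₁ : ρ₁ τ ≠ 1 := fun h => by simpa [h] using congrFun (congrFun hτ 0) 1
  have hc : b₂ τ ≠ 0 := fun hc => hτ₁ <| by
    rw [← MonoidHom.mem_ker, hker, MonoidHom.mem_ker]
    ext1
    rw [hρ₂, haτ, hdτ, hc, Units.val_one, one_fin_two]
  exact exists_upper_conj_of_sub_mul_eq hρ₁ hρ₂ hc hβ

theorem conjugate_of_same_diagonal (p : ℕ) (hp : p.Prime)
    {G : Type*} [Group G] (ρ₁ ρ₂ : G →* GL (Fin 2) (ZMod p))
    (hker : ρ₁.ker = ρ₂.ker)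
    (hupper₁ : ∀ σ : G, ((ρ₁ σ : GL (Fin 2) (ZMod p)) : Matrix (Fin 2) (Fin 2) (ZMod p)) 1 0 = 0)
    (hupper₂ : ∀ σ : G, ((ρ₂ σ : GL (Fin 2) (ZMod p)) : Matrix (Fin 2) (Fin 2) (ZMod p)) 1 0 = 0)
    (hdiag : ∀ σ : G,
      ((ρ₁ σ : GL (Fin 2) (ZMod p)) : Matrix (Fin 2) (Fin 2) (ZMod p)) 0 0 =
        ((ρ₂ σ : GL (Fin 2) (ZMod p)) : Matrix (Fin 2) (Fin 2) (ZMod p)) 0 0 ∧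
      ((ρ₁ σ : GL (Fin 2) (ZMod p)) : Matrix (Fin 2) (Fin 2) (ZMod p)) 1 1 =
        ((ρ₂ σ : GL (Fin 2) (ZMod p)) : Matrix (Fin 2) (Fin 2) (ZMod p)) 1 1)
    (hunip₁ : ∃ σ : G,
      ((ρ₁ σ : GL (Fin 2) (ZMod p)) : Matrix (Fin 2) (Fin 2) (ZMod p)) = !![1, 1; 0, 1])
    (hunip₂ : ∃ σ : G,
      ((ρ₂ σ : GL (Fin 2) (ZMod p)) : Matrix (Fin 2) (Fin 2) (ZMod p)) = !![1, 1; 0, 1]) :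
    ∃ A : GL (Fin 2) (ZMod p),
      ((A : GL (Fin 2) (ZMod p)) : Matrix (Fin 2) (Fin 2) (ZMod p)) 1 0 = 0 ∧
      ∀ σ : G, ρ₂ σ = A * ρ₁ σ * A⁻¹ :=
  conjugate_of_same_diagonal_general p hp ρ₁ ρ₂ hker hupper₁ hupper₂ hdiag hunip₁
end
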